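/- arXiv:0708.0329 — 5 statements merged into one kernel-verified Lean document; each statement's English description precedes it below -/
import Mathlib

section
/- Let β ≥ 2 and let μ₀ be a finite positive Borel measure on X with ∫(1+E^β) dμ₀ < ∞, and let (μ_t)_{t≥0} be the solution of the coagulation kinetic equation with initial condition μ₀ satisfying sup_{s≤t} ∫(1+E^β) dμ_s < ∞ for all t. Then for every t > 0, sup_{s≤t} ∫ E(y)^β μ_s(dy) ≤ c · ∫ E(y)^β μ₀(dy), where the constant c depends only on C, t, β and ∫ (1+E) dμ₀. -/
open MeasureTheory Filter Topology
open scoped ENNReal ZeroAtInfty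

variable {X : Type*} [MetricSpace X] [CompleteSpace X] [SecondCountableTopology X]
  [LocallyCompactSpace X] [MeasurableSpace X] [BorelSpace X]

/-- A coagulation kernel with constant `C`: a family of finite positive Borel measures
`K x₁ x₂` on `X`, weak-* continuous in `(x₁, x₂)`, symmetric, `E`-preserving, and with
intensity bounded by `C * (1 + E x₁ + E x₂)`. -/
structure IsCoagKernel (E : X → ℝ) (C : ℝ) (K : X → X → Measure X) : Prop where
  finite : ∀ x₁ x₂, IsFiniteMeasure (K x₁ x₂)
  weakCont : ∀ g : C₀(X, ℝ), Continuous fun p : X × X => ∫ y, g y ∂(K p.1 p.2)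
  symm : ∀ x₁ x₂, K x₁ x₂ = K x₂ x₁
  epreserve : ∀ x₁ x₂, (K x₁ x₂) {y | E y = E x₁ + E x₂}ᶜ = 0
  intensity : ∀ x₁ x₂, ((K x₁ x₂) Set.univ).toReal ≤ C * (1 + E x₁ + E x₂)

/-- `μ` is a solution of the coagulation kinetic equation with initial condition `μ₀`:
a family of finite positive Borel measures with `μ 0 = μ₀` such that for every
continuous `g` vanishing at infinity, `t ↦ (g, μ t)` is differentiable on `[0, ∞)`
with the prescribed derivative. -/
def IsCoagSolution (E : X → ℝ) (K : X → X → Measure X) (μ₀ : Measure X)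
    (μ : ℝ → Measure X) : Prop :=
  μ 0 = μ₀ ∧ (∀ t, IsFiniteMeasure (μ t)) ∧
    ∀ g : C₀(X, ℝ), ∀ t ∈ Set.Ici (0:ℝ),
      HasDerivWithinAt (fun s => ∫ y, g y ∂(μ s))
        ((1/2) * ∫ x₁, ∫ x₂, ∫ y, (g y - g x₁ - g x₂) ∂(K x₁ x₂) ∂(μ t) ∂(μ t))
        (Set.Ici 0) t

/-- The moments `∫ (1 + E^β) dμ_s` are bounded uniformly on every compact time interval:
`sup_{s ≤ t} ∫ (1 + E^β) dμ_s < ∞` for every `t > 0`. -/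
def MomentBounded (E : X → ℝ) (β : ℝ) (μ : ℝ → Measure X) : Prop :=
  ∀ T > (0:ℝ), ∃ M : ℝ≥0∞, M < ⊤ ∧ ∀ s ∈ Set.Icc (0:ℝ) T,
    ∫⁻ y, ENNReal.ofReal (1 + E y ^ β) ∂(μ s) ≤ M


set_option linter.unusedSectionVars false
set_option maxHeartbeats 1000000

namespace CoagAux

/-- chord inequality for rpow -/
lemma chord {β a b : ℝ} (hβ : 1 ≤ β) (ha : 0 ≤ a) (hab : a ≤ b) :
    (a + b) ^ β ≤ b ^ β + (2 ^ β - 1) * (a * b ^ (β - 1)) := by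
  have hb : 0 ≤ b := ha.trans hab
  rcases eq_or_lt_of_le hb with hb0 | hb0
  · have ha0 : a = 0 := le_antisymm (hab.trans hb0.ge) ha
    subst ha0
    simp [← hb0]
  · set t : ℝ := a / b with htdef
    have ht0 : 0 ≤ t := div_nonneg ha hb
    have ht1 : t ≤ 1 := (div_le_one hb0).2 hab
    have hconv := (convexOn_rpow hβ).2 (Set.mem_Ici.2 hb) (Set.mem_Ici.2 (by linarith : (0:ℝ) ≤ 2*b))
      (by linarith : (0:ℝ) ≤ 1 - t) ht0 (by ring)
    have hcomb : (1 - t) • b + t • (2*b) = a + b := by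
      field_simp [htdef]
      have h' : b * t = a := by rw [htdef]; field_simp
      simp only [smul_eq_mul]
      linarith
    rw [hcomb] at hconv
    have h2b : (2*b) ^ β = 2 ^ β * b ^ β := Real.mul_rpow (by norm_num) hb
    have hbb : b ^ β = b ^ (β - 1) * b := by
      rw [← Real.rpow_add_one (ne_of_gt hb0) (β - 1)]
      ring_nf
    have : (a+b) ^ β ≤ (1-t) * b ^ β + t * (2 ^ β * b ^ β) := by
      simpa [smul_eq_mul, h2b] using hconv
    have htb : t * b ^ β = a * b ^ (β - 1) := by
      rw [hbb, htdef]
      field_simp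
    calc (a+b) ^ β ≤ (1-t) * b ^ β + t * (2 ^ β * b ^ β) := this
      _ = b ^ β + (2 ^ β - 1) * (t * b ^ β) := by ring
      _ = b ^ β + (2 ^ β - 1) * (a * b ^ (β-1)) := by rw [htb]


lemma rpow_split {v : ℝ} (p : ℝ) (hv : 0 ≤ v) (hp : p + 1 ≠ 0) : v ^ (p + 1) = v ^ p * v := by
  rw [Real.rpow_add' hv hp, Real.rpow_one]

lemma rpow_split' {v β : ℝ} (hβ : 1 ≤ β) (hv : 0 ≤ v) : v ^ β = v ^ (β - 1) * v := by
  have h := rpow_split (β - 1) hv (by intro h; linarith [sub_add_cancel β 1, h])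
  rwa [sub_add_cancel] at h

/-- the basic superadditivity defect bound -/
lemma defect {β a b : ℝ} (hβ : 1 ≤ β) (ha : 0 ≤ a) (hb : 0 ≤ b) :
    (a + b) ^ β - a ^ β - b ^ β ≤ (2 ^ β - 1) * (a * b ^ (β-1) + a ^ (β-1) * b) := by
  have h2 : (0:ℝ) ≤ 2 ^ β - 1 := by
    have : (1:ℝ) ≤ 2 ^ β := by
      calc (1:ℝ) = 1 ^ β := (Real.one_rpow β).symm
      _ ≤ 2 ^ β := Real.rpow_le_rpow (by norm_num) (by norm_num) (by linarith)
    linarith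
  rcases le_total a b with hab | hab
  · have := chord hβ ha hab
    have h1 : 0 ≤ a ^ (β-1) * b := mul_nonneg (Real.rpow_nonneg ha _) hb
    have h2' : 0 ≤ a ^ β := Real.rpow_nonneg ha _
    nlinarith [mul_nonneg h2 h1]
  · have := chord hβ hb hab
    rw [add_comm b a] at this
    have h1 : 0 ≤ a * b ^ (β-1) := mul_nonneg ha (Real.rpow_nonneg hb _)
    have h2' : 0 ≤ b ^ β := Real.rpow_nonneg hb _
    nlinarith [mul_nonneg h2 h1]

lemma young2 {β a b : ℝ} (hβ : 1 ≤ β) (ha : 0 ≤ a) (hb : 0 ≤ b) :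
    a * b ^ (β-1) + a ^ (β-1) * b ≤ 2 * (a ^ β + b ^ β) := by
  have key : ∀ u v : ℝ, 0 ≤ u → u ≤ v → u * v ^ (β-1) + u ^ (β-1) * v ≤ 2 * (u ^ β + v ^ β) := by
    intro u v hu huv
    have hv : 0 ≤ v := hu.trans huv
    have h1 : u * v ^ (β-1) ≤ v * v ^ (β-1) :=
      mul_le_mul_of_nonneg_right huv (Real.rpow_nonneg hv _)
    have h2 : u ^ (β-1) * v ≤ v ^ (β-1) * v :=
      mul_le_mul_of_nonneg_right (Real.rpow_le_rpow hu huv (by linarith)) hv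
    have hvv : v * v ^ (β-1) = v ^ β := by
      rw [rpow_split' hβ hv]; exact mul_comm _ _
    have hvv' : v ^ (β-1) * v = v ^ β := by rw [mul_comm, hvv]
    have hu0 : 0 ≤ u ^ β := Real.rpow_nonneg hu _
    have hv0 : 0 ≤ v ^ β := Real.rpow_nonneg hv _
    nlinarith
  rcases le_total a b with hab | hab
  · exact key a b ha hab
  · have := key b a hb hab
    nlinarith [this]

/-- degree β+1 product bound -/
lemma deg1 {β a b : ℝ} (hβ : 2 ≤ β) (ha : 0 ≤ a) (hb : 0 ≤ b) :
    a * (a * b ^ (β-1)) ≤ a * b ^ β + a ^ β * b := by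
  have hab0 : 0 ≤ a * b ^ β := mul_nonneg ha (Real.rpow_nonneg hb _)
  have hba0 : 0 ≤ a ^ β * b := mul_nonneg (Real.rpow_nonneg ha _) hb
  rcases le_total a b with hab | hab
  · have h1 : a * b ^ (β-1) ≤ b * b ^ (β-1) :=
      mul_le_mul_of_nonneg_right hab (Real.rpow_nonneg hb _)
    have hvv : b * b ^ (β-1) = b ^ β := by
      conv_rhs => rw [rpow_split' (by linarith : 1 ≤ β) hb]
      exact mul_comm _ _
    calc a * (a * b ^ (β-1)) ≤ a * b ^ β := by
          apply mul_le_mul_of_nonneg_left _ ha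
          rw [← hvv]; exact h1
      _ ≤ a * b ^ β + a ^ β * b := by linarith
  · -- b ≤ a : a * a * b^(β-1) ≤ a^β * b since b^(β-2) ≤ a^(β-2)
    have hbb : b ^ (β-1) = b ^ (β-2) * b := by
      have h := rpow_split (β - 2) hb (by intro h; nlinarith)
      rw [show β - 2 + 1 = β - 1 by ring] at h
      exact h
    have h2 : b ^ (β-2) ≤ a ^ (β-2) := Real.rpow_le_rpow hb hab (by linarith)
    have haa : a * (a * a ^ (β-2)) = a ^ β := by
      have h1 := rpow_split (β - 2) ha (by intro h; nlinarith)
      rw [show β - 2 + 1 = β - 1 by ring] at h1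
      have h2 := rpow_split' (by linarith : 1 ≤ β) ha
      rw [h2, h1]; ring
    have : a * (a * b ^ (β-1)) ≤ a ^ β * b := by
      rw [hbb, ← haa]
      have hstep : a * b ^ (β-2) ≤ a * a ^ (β-2) := mul_le_mul_of_nonneg_left h2 ha
      calc a * (a * (b ^ (β-2) * b)) = (a * (a * b ^ (β-2))) * b := by ring
        _ ≤ (a * (a * a ^ (β-2))) * b := by
            apply mul_le_mul_of_nonneg_right _ hb
            exact mul_le_mul_of_nonneg_left hstep ha
    linarith

/-! ### Tent functions -/

/-- truncation of `1 + r` -/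
noncomputable def tentLin (m : ℕ) (r : ℝ) : ℝ :=
  min (1 + max r 0) (max (2 * m - r) 0)

/-- truncation of `r ^ β` -/
noncomputable def tentPow (β : ℝ) (n : ℕ) (r : ℝ) : ℝ :=
  min (max r 0 ^ β) ((n : ℝ) ^ (β - 1) * max (2 * n - r) 0)

lemma tentLin_nonneg (m : ℕ) (r : ℝ) : 0 ≤ tentLin m r :=
  le_min (by positivity) (le_max_right _ _)

lemma tentLin_le (m : ℕ) {r : ℝ} (hr : 0 ≤ r) : tentLin m r ≤ 1 + r := by
  refine (min_le_left _ _).trans ?_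
  simp [max_eq_left hr]

lemma tentLin_bdd (m : ℕ) {r : ℝ} (hr : 0 ≤ r) : tentLin m r ≤ 2 * m := by
  refine (min_le_right _ _).trans ?_
  exact max_le (by linarith) (by positivity)

lemma tentLin_cont (m : ℕ) : Continuous (tentLin m) := by
  unfold tentLin; fun_prop

lemma tentLin_zero (m : ℕ) {r : ℝ} (hr : 2 * m ≤ r) : tentLin m r = 0 := by
  have : max (2 * (m:ℝ) - r) 0 = 0 := max_eq_right (by linarith)
  have h := tentLin_nonneg m r
  have h2 : tentLin m r ≤ 0 := by
    unfold tentLin; rw [this]; exact min_le_right _ _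
  linarith

lemma tentLin_subadd (m : ℕ) {a b : ℝ} (ha : 0 ≤ a) (hb : 0 ≤ b) :
    tentLin m (a + b) ≤ tentLin m a + tentLin m b := by
  have hb0 := tentLin_nonneg m b
  have ha0 := tentLin_nonneg m a
  rcases le_total (1 + max a 0) (max (2 * (m:ℝ) - a) 0) with h | h
  · rcases le_total (1 + max b 0) (max (2 * (m:ℝ) - b) 0) with h' | h'
    · have e1 : tentLin m a = 1 + a := by
        unfold tentLin; rw [min_eq_left h, max_eq_left ha]
      have e2 : tentLin m b = 1 + b := by
        unfold tentLin; rw [min_eq_left h', max_eq_left hb]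
      have : tentLin m (a + b) ≤ 1 + (a + b) := tentLin_le m (by linarith)
      rw [e1, e2]; linarith
    · -- tentLin m b = tent part
      have e2 : tentLin m b = max (2 * (m:ℝ) - b) 0 := by
        unfold tentLin; rw [min_eq_right h']
      have : tentLin m (a + b) ≤ max (2 * (m:ℝ) - (a+b)) 0 := min_le_right _ _
      have h3 : max (2 * (m:ℝ) - (a+b)) 0 ≤ max (2 * (m:ℝ) - b) 0 :=
        max_le_max (by linarith) le_rfl
      rw [e2]; linarith
  · have e1 : tentLin m a = max (2 * (m:ℝ) - a) 0 := by
      unfold tentLin; rw [min_eq_right h]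
    have : tentLin m (a + b) ≤ max (2 * (m:ℝ) - (a+b)) 0 := min_le_right _ _
    have h3 : max (2 * (m:ℝ) - (a+b)) 0 ≤ max (2 * (m:ℝ) - a) 0 :=
      max_le_max (by linarith) le_rfl
    rw [e1]; linarith

lemma tentLin_mono (r : ℝ) : Monotone fun m : ℕ => tentLin m r := by
  intro m m' hmm'
  unfold tentLin
  have hc : (m:ℝ) ≤ m' := by exact_mod_cast hmm'
  exact min_le_min le_rfl (max_le_max (by linarith) le_rfl)

lemma tentLin_eventually {r : ℝ} (hr : 0 ≤ r) {m : ℕ} (hm : r + 1 ≤ m) :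
    tentLin m r = 1 + r := by
  unfold tentLin
  rw [max_eq_left hr, min_eq_left]
  refine le_max_of_le_left ?_
  have : (1:ℝ) ≤ m := by linarith
  linarith

lemma tentPow_nonneg (β : ℝ) (n : ℕ) (r : ℝ) : 0 ≤ tentPow β n r :=
  le_min (Real.rpow_nonneg (le_max_right _ _) _)
    (mul_nonneg (Real.rpow_nonneg (Nat.cast_nonneg n) _) (le_max_right _ _))

lemma tentPow_le (β : ℝ) (n : ℕ) {r : ℝ} (hr : 0 ≤ r) : tentPow β n r ≤ r ^ β := by
  refine (min_le_left _ _).trans ?_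
  rw [max_eq_left hr]

lemma tentPow_cont {β : ℝ} (hβ : 1 ≤ β) (n : ℕ) : Continuous (tentPow β n) := by
  unfold tentPow
  apply Continuous.min
  · apply Continuous.rpow_const (continuous_id.max continuous_const)
    intro x; right; linarith
  · fun_prop

lemma tentPow_zero (β : ℝ) (n : ℕ) {r : ℝ} (hr : 2 * n ≤ r) : tentPow β n r = 0 := by
  have hmax : max (2 * (n:ℝ) - r) 0 = 0 := max_eq_right (by linarith)
  have h := tentPow_nonneg β n r
  have h2 : tentPow β n r ≤ 0 := by
    unfold tentPow; rw [hmax, mul_zero]; exact min_le_right _ _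
  linarith

lemma tentPow_bdd {β : ℝ} (n : ℕ) {r : ℝ} (hr : 0 ≤ r) :
    tentPow β n r ≤ (n : ℝ) ^ (β - 1) * (2 * n) := by
  refine (min_le_right _ _).trans ?_
  have h0 : (0:ℝ) ≤ (n:ℝ) ^ (β-1) := Real.rpow_nonneg (Nat.cast_nonneg n) _
  have h1 : max (2 * (n:ℝ) - r) 0 ≤ 2 * n :=
    max_le (by linarith) (by positivity)
  exact mul_le_mul_of_nonneg_left h1 h0

/-- below the threshold, `tentPow` equals the power -/
lemma tentPow_eq_low {β : ℝ} (hβ : 1 ≤ β) {n : ℕ} (hn : 1 ≤ n) {r : ℝ} (hr : r ≤ n) :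
    tentPow β n r = max r 0 ^ β := by
  unfold tentPow
  rw [min_eq_left]
  have hn0 : (0:ℝ) ≤ n := Nat.cast_nonneg n
  have hn1 : (1:ℝ) ≤ n := by exact_mod_cast hn
  have h1 : max r 0 ^ β ≤ (n:ℝ) ^ β :=
    Real.rpow_le_rpow (le_max_right _ _) (max_le hr hn0) (by linarith)
  have h2 : (n:ℝ) ^ β = (n:ℝ) ^ (β - 1) * n := rpow_split' hβ hn0
  have h3 : (n:ℝ) ≤ max (2 * (n:ℝ) - r) 0 := le_max_of_le_left (by linarith)
  calc max r 0 ^ β ≤ (n:ℝ) ^ (β-1) * n := by rw [← h2]; exact h1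
    _ ≤ (n:ℝ) ^ (β-1) * max (2 * (n:ℝ) - r) 0 :=
        mul_le_mul_of_nonneg_left h3 (Real.rpow_nonneg hn0 _)

/-- above the threshold, `tentPow` equals the tent part -/
lemma tentPow_eq_high {β : ℝ} (hβ : 1 ≤ β) {n : ℕ} (hn : 1 ≤ n) {r : ℝ} (hr : (n:ℝ) ≤ r) :
    tentPow β n r = (n : ℝ) ^ (β - 1) * max (2 * n - r) 0 := by
  unfold tentPow
  rw [min_eq_right]
  have hn0 : (0:ℝ) ≤ n := Nat.cast_nonneg n
  have hn1 : (1:ℝ) ≤ n := by exact_mod_cast hn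
  have hr0 : 0 ≤ r := by linarith
  have h2 : (n:ℝ) ^ β = (n:ℝ) ^ (β - 1) * n := rpow_split' hβ hn0
  have h3 : max (2 * (n:ℝ) - r) 0 ≤ n := max_le (by linarith) hn0
  calc (n:ℝ) ^ (β-1) * max (2 * (n:ℝ) - r) 0 ≤ (n:ℝ) ^ (β-1) * n :=
        mul_le_mul_of_nonneg_left h3 (Real.rpow_nonneg hn0 _)
    _ = (n:ℝ) ^ β := h2.symm
    _ ≤ r ^ β := Real.rpow_le_rpow hn0 hr (by linarith)
    _ = max r 0 ^ β := by rw [max_eq_left hr0]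

lemma tentPow_mono {β : ℝ} (hβ : 1 ≤ β) (r : ℝ) : Monotone fun n : ℕ => tentPow β n r := by
  intro m m' hmm'
  unfold tentPow
  have hc : (m:ℝ) ≤ m' := by exact_mod_cast hmm'
  refine min_le_min le_rfl (mul_le_mul ?_ (max_le_max (by linarith) le_rfl)
    (le_max_right _ _) (Real.rpow_nonneg (Nat.cast_nonneg m') _))
  exact Real.rpow_le_rpow (Nat.cast_nonneg m) hc (by linarith)

lemma tentPow_eventually {β : ℝ} (hβ : 1 ≤ β) {r : ℝ} (hr : 0 ≤ r) {n : ℕ} (hn : 1 ≤ n)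
    (hrn : r ≤ n) : tentPow β n r = r ^ β := by
  rw [tentPow_eq_low hβ hn hrn, max_eq_left hr]


lemma two_rpow_ge_one {β : ℝ} (hβ : 0 ≤ β) : (1:ℝ) ≤ 2 ^ β := by
  calc (1:ℝ) = 1 ^ β := (Real.one_rpow β).symm
  _ ≤ 2 ^ β := Real.rpow_le_rpow (by norm_num) (by norm_num) hβ

/-- the key pointwise inequality for the truncated power moment -/
lemma tentPow_key {β : ℝ} (hβ : 2 ≤ β) {n : ℕ} (hn : 1 ≤ n) {C a b k : ℝ}
    (ha : 0 ≤ a) (hb : 0 ≤ b) (hk : 0 ≤ k) (hkC : k ≤ C * (1 + a + b)) :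
    (tentPow β n (a + b) - tentPow β n a - tentPow β n b) * k ≤
      C * 2 ^ β * (2 * (tentPow β n a + tentPow β n b)
        + 3 * (a * tentPow β n b + b * tentPow β n a)) := by
  have hβ1 : (1:ℝ) ≤ β := by linarith
  have hfa0 := tentPow_nonneg β n a
  have hfb0 := tentPow_nonneg β n b
  have hCab : 0 ≤ C * (1 + a + b) := hk.trans hkC
  have h2β0 : (0:ℝ) ≤ 2 ^ β := by positivity
  have h2β1 : (1:ℝ) ≤ 2 ^ β := two_rpow_ge_one (by linarith)
  have hC0 : 0 ≤ C := by nlinarith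
  have hRHS : 0 ≤ C * 2 ^ β * (2 * (tentPow β n a + tentPow β n b)
      + 3 * (a * tentPow β n b + b * tentPow β n a)) := by
    have : 0 ≤ a * tentPow β n b := mul_nonneg ha hfb0
    have : 0 ≤ b * tentPow β n a := mul_nonneg hb hfa0
    positivity
  set c₀ : ℝ := tentPow β n (a + b) - tentPow β n a - tentPow β n b with hc₀
  rcases le_or_gt c₀ 0 with hneg | hpos
  · exact (mul_nonpos_of_nonpos_of_nonneg hneg hk).trans hRHS
  -- positive defect: both a and b must lie below the threshold
  have hhigh : ∀ u v : ℝ, 0 ≤ u → 0 ≤ v → (n:ℝ) ≤ u →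
      tentPow β n (u + v) ≤ tentPow β n u := by
    intro u v hu hv hnu
    rw [tentPow_eq_high hβ1 hn hnu, tentPow_eq_high hβ1 hn (by linarith : (n:ℝ) ≤ u + v)]
    exact mul_le_mul_of_nonneg_left (max_le_max (by linarith) le_rfl)
      (Real.rpow_nonneg (Nat.cast_nonneg n) _)
  have hban : a ≤ n := by
    by_contra hcon
    push_neg at hcon
    have := hhigh a b ha hb hcon.le
    simp only [hc₀] at hpos
    linarith
  have hbbn : b ≤ n := by
    by_contra hcon
    push_neg at hcon
    have := hhigh b a hb ha hcon.le
    rw [add_comm b a] at this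
    simp only [hc₀] at hpos
    linarith
  have hfa : tentPow β n a = a ^ β := by
    rw [tentPow_eq_low hβ1 hn hban, max_eq_left ha]
  have hfb : tentPow β n b = b ^ β := by
    rw [tentPow_eq_low hβ1 hn hbbn, max_eq_left hb]
  have hfab : tentPow β n (a + b) ≤ (a + b) ^ β := tentPow_le β n (by linarith)
  set S : ℝ := a * b ^ (β - 1) + a ^ (β - 1) * b with hS
  have hS0 : 0 ≤ S := by
    have := mul_nonneg ha (Real.rpow_nonneg hb (β - 1))
    have := mul_nonneg (Real.rpow_nonneg ha (β - 1)) hb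
    rw [hS]; linarith
  have hd : c₀ ≤ (2 ^ β - 1) * S := by
    have := defect hβ1 ha hb
    rw [hc₀, hfa, hfb, hS]
    linarith
  -- expansion bound
  have e1 : a * (a ^ (β - 1) * b) = a ^ β * b := by
    rw [rpow_split' hβ1 ha]; ring
  have e2 : b * (a * b ^ (β - 1)) = a * b ^ β := by
    rw [rpow_split' hβ1 hb]; ring
  have h1 : S ≤ 2 * (a ^ β + b ^ β) := by rw [hS]; exact young2 hβ1 ha hb
  have h3 : a * (a * b ^ (β - 1)) ≤ a * b ^ β + a ^ β * b := deg1 hβ ha hb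
  have h4 : b * (b * a ^ (β - 1)) ≤ b * a ^ β + b ^ β * a := deg1 hβ hb ha
  set T : ℝ := 2 * (a ^ β + b ^ β) + 3 * (a * b ^ β + a ^ β * b) with hT
  have hT0 : 0 ≤ T := by
    have h5 : 0 ≤ a ^ β := Real.rpow_nonneg ha _
    have h6 : 0 ≤ b ^ β := Real.rpow_nonneg hb _
    have h7 : 0 ≤ a * b ^ β := mul_nonneg ha h6
    have h8 : 0 ≤ a ^ β * b := mul_nonneg h5 hb
    rw [hT]; linarith
  have hexp : S * (1 + a + b) ≤ T := by
    rw [hT, hS]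
    nlinarith [h1, h3, h4, e1, e2]
  have hchain : c₀ * k ≤ C * 2 ^ β * T := by
    calc c₀ * k ≤ c₀ * (C * (1 + a + b)) :=
          mul_le_mul_of_nonneg_left hkC hpos.le
      _ ≤ ((2 ^ β - 1) * S) * (C * (1 + a + b)) :=
          mul_le_mul_of_nonneg_right hd hCab
      _ = C * ((2 ^ β - 1) * (S * (1 + a + b))) := by ring
      _ ≤ C * ((2 ^ β - 1) * T) := by
          apply mul_le_mul_of_nonneg_left _ hC0
          exact mul_le_mul_of_nonneg_left hexp (by linarith)
      _ ≤ C * (2 ^ β * T) := by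
          apply mul_le_mul_of_nonneg_left _ hC0
          exact mul_le_mul_of_nonneg_right (by linarith) hT0
      _ = C * 2 ^ β * T := by ring
  calc (tentPow β n (a + b) - tentPow β n a - tentPow β n b) * k = c₀ * k := by rw [hc₀]
    _ ≤ C * 2 ^ β * T := hchain
    _ = C * 2 ^ β * (2 * (tentPow β n a + tentPow β n b)
        + 3 * (a * tentPow β n b + b * tentPow β n a)) := by
        rw [hT, hfa, hfb]; ring


/-- Build an element of `C₀(X, ℝ)` from a function of the energy that vanishes
for large energies. -/
noncomputable def mkC0 (E : X → ℝ) (hEc : Continuous E)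
    (hEinf : Tendsto E (cocompact X) atTop)
    (f : ℝ → ℝ) (hf : Continuous f) (b : ℝ) (h0 : ∀ r, b ≤ r → f r = 0) : C₀(X, ℝ) where
  toFun := fun x => f (E x)
  continuous_toFun := hf.comp hEc
  zero_at_infty' := by
    have hf0 : Tendsto f atTop (𝓝 0) := by
      refine tendsto_const_nhds.congr' ?_
      filter_upwards [eventually_ge_atTop b] with r hr
      exact (h0 r hr).symm
    exact hf0.comp hEinf

@[simp] lemma mkC0_apply (E : X → ℝ) (hEc : Continuous E)
    (hEinf : Tendsto E (cocompact X) atTop)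
    (f : ℝ → ℝ) (hf : Continuous f) (b : ℝ) (h0 : ∀ r, b ≤ r → f r = 0) (x : X) :
    mkC0 E hEc hEinf f hf b h0 x = f (E x) := rfl

/-- The total mass of the kernel is a measurable function of the pair. -/
theorem mass_measurable {E : X → ℝ} (hEc : Continuous E)
    (hEinf : Tendsto E (cocompact X) atTop) {C : ℝ} {K : X → X → Measure X}
    (hK : IsCoagKernel E C K) :
    Measurable fun p : X × X => ((K p.1 p.2) Set.univ).toReal := by
  have hcont : ∀ k : ℕ, Continuous fun r : ℝ => min 1 (max ((k:ℝ) + 1 - r) 0) := by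
    intro k; fun_prop
  set χ : ℕ → C₀(X, ℝ) := fun k => mkC0 E hEc hEinf _ (hcont k) ((k:ℝ) + 1)
    (fun r hr => by
      rw [max_eq_right (by linarith : (k:ℝ) + 1 - r ≤ 0), min_eq_right zero_le_one]) with hχ
  have hSM : ∀ k : ℕ, StronglyMeasurable fun p : X × X => ∫ y, (χ k) y ∂(K p.1 p.2) :=
    fun k => (hK.weakCont (χ k)).stronglyMeasurable
  have hlim : ∀ p : X × X, Tendsto (fun k => ∫ y, (χ k) y ∂(K p.1 p.2)) atTop
      (𝓝 (((K p.1 p.2) Set.univ).toReal)) := by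
    intro p
    haveI := hK.finite p.1 p.2
    have hone : ((K p.1 p.2) Set.univ).toReal = ∫ _y, (1:ℝ) ∂(K p.1 p.2) := by
      rw [integral_const, smul_eq_mul, mul_one]
      rfl
    rw [hone]
    apply tendsto_integral_of_dominated_convergence (fun _ => (1:ℝ))
    · intro k; exact ((χ k).continuous).aestronglyMeasurable
    · exact integrable_const 1
    · intro k
      filter_upwards with y
      have h1 : (0:ℝ) ≤ min 1 (max ((k:ℝ) + 1 - E y) 0) :=
        le_min zero_le_one (le_max_right _ _)
      have h2 : min 1 (max ((k:ℝ) + 1 - E y) 0) ≤ 1 := min_le_left _ _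
      have : (χ k) y = min 1 (max ((k:ℝ) + 1 - E y) 0) := rfl
      rw [this, Real.norm_eq_abs, abs_le]
      constructor <;> linarith
    · filter_upwards with y
      refine tendsto_const_nhds.congr' ?_
      filter_upwards [eventually_ge_atTop ⌈E y⌉₊] with k hk
      have hky : E y ≤ (k:ℝ) := (Nat.le_ceil (E y)).trans (by exact_mod_cast hk)
      have : (χ k) y = min 1 (max ((k:ℝ) + 1 - E y) 0) := rfl
      rw [this, max_eq_left (by linarith), min_eq_left (by linarith)]
  exact (stronglyMeasurable_of_tendsto atTop hSM (tendsto_pi_nhds.2 hlim)).measurable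

/-- Evaluation of the inner collision integral using energy preservation. -/
theorem inner_eq {E : X → ℝ} {C : ℝ} {K : X → X → Measure X} (hK : IsCoagKernel E C K)
    (f : ℝ → ℝ) (g : C₀(X, ℝ)) (hg : ∀ x, g x = f (E x)) (x₁ x₂ : X) :
    ∫ y, (g y - g x₁ - g x₂) ∂(K x₁ x₂)
      = (f (E x₁ + E x₂) - f (E x₁) - f (E x₂)) * ((K x₁ x₂) Set.univ).toReal := by
  haveI := hK.finite x₁ x₂
  have hae : (fun y => g y - g x₁ - g x₂) =ᵐ[K x₁ x₂]
      (fun _ => f (E x₁ + E x₂) - f (E x₁) - f (E x₂)) := by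
    have hnull := hK.epreserve x₁ x₂
    rw [Filter.EventuallyEq, ae_iff]
    apply measure_mono_null _ hnull
    intro y hy
    simp only [Set.mem_setOf_eq] at hy
    intro hEy
    simp only [Set.mem_setOf_eq] at hEy
    apply hy
    rw [hg y, hg x₁, hg x₂, hEy]
  rw [integral_congr_ae hae, integral_const, smul_eq_mul, mul_comm]
  rfl

/-- One-sided Gronwall estimate from the differential inequality on `[0, ∞)`. -/
theorem gronwall_aux (φ D : ℝ → ℝ) (A : ℝ)
    (hder : ∀ u ∈ Set.Ici (0:ℝ), HasDerivWithinAt φ (D u) (Set.Ici 0) u)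
    (hle : ∀ u ∈ Set.Ici (0:ℝ), D u ≤ A * φ u) {s : ℝ} (hs : 0 ≤ s) :
    φ s ≤ Real.exp (A * s) * φ 0 := by
  have hψder : ∀ u ∈ Set.Ici (0:ℝ), HasDerivWithinAt (fun u => φ u * Real.exp (-(A * u)))
      (D u * Real.exp (-(A * u)) + φ u * (-A * Real.exp (-(A * u)))) (Set.Ici 0) u := by
    intro u hu
    have h1 : HasDerivAt (fun u : ℝ => -(A * u)) (-A) u := by
      have h := ((hasDerivAt_id u).const_mul A).neg
      rw [mul_one] at h
      exact h
    have hexp : HasDerivAt (fun u : ℝ => Real.exp (-(A * u)))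
        (-A * Real.exp (-(A * u))) u := by
      simpa [mul_comm] using h1.exp
    exact (hder u hu).mul hexp.hasDerivWithinAt
  have hmono : AntitoneOn (fun u => φ u * Real.exp (-(A * u))) (Set.Ici 0) := by
    apply antitoneOn_of_deriv_nonpos (convex_Ici 0)
    · intro u hu; exact (hψder u hu).continuousWithinAt
    · intro u hu
      rw [interior_Ici] at hu
      exact ((hψder u (Set.mem_Ici.2 (le_of_lt (Set.mem_Ioi.1 hu)))).hasDerivAt
        (Ici_mem_nhds hu)).differentiableAt.differentiableWithinAt
    · intro u hu
      rw [interior_Ici] at hu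
      rw [((hψder u (Set.mem_Ici.2 (le_of_lt (Set.mem_Ioi.1 hu)))).hasDerivAt (Ici_mem_nhds hu)).deriv]
      have h1 := hle u (Set.mem_Ici.2 (le_of_lt (Set.mem_Ioi.1 hu)))
      have h2 : 0 < Real.exp (-(A * u)) := Real.exp_pos _
      nlinarith
  have h := hmono (Set.mem_Ici.2 le_rfl) (Set.mem_Ici.2 hs) hs
  simp only [mul_zero, neg_zero, Real.exp_zero, mul_one] at h
  have h2 := mul_le_mul_of_nonneg_right h (le_of_lt (Real.exp_pos (A * s)))
  rw [mul_assoc, ← Real.exp_add, neg_add_cancel, Real.exp_zero, mul_one] at h2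
  linarith


/-- The central estimate: the collision term of the kinetic equation is bounded using the
pointwise kernel inequality `hkey`. -/
theorem double_integral_le
    {E : X → ℝ} (hEc : Continuous E) (hE0 : ∀ x, 0 ≤ E x)
    (hEinf : Tendsto E (cocompact X) atTop)
    {C : ℝ} {K : X → X → Measure X} (hK : IsCoagKernel E C K)
    (μ : Measure X) [IsFiniteMeasure μ] (hEint : Integrable E μ)
    (f : ℝ → ℝ) (hfc : Continuous f) (g : C₀(X, ℝ)) (hg : ∀ x, g x = f (E x))
    (B : ℝ) (hfB : ∀ r : ℝ, 0 ≤ r → 0 ≤ f r ∧ f r ≤ B)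
    (c₁ c₂ : ℝ) (hC0 : 0 ≤ C)
    (hkey : ∀ a b : ℝ, 0 ≤ a → 0 ≤ b → ∀ k : ℝ, 0 ≤ k → k ≤ C * (1 + a + b) →
      (f (a + b) - f a - f b) * k ≤ c₁ * (f a + f b) + c₂ * (a * f b + b * f a)) :
    ∫ x₁, ∫ x₂, ∫ y, (g y - g x₁ - g x₂) ∂(K x₁ x₂) ∂μ ∂μ
      ≤ (c₁ * (μ Set.univ).toReal + c₂ * ∫ x, E x ∂μ) * (2 * ∫ x, g x ∂μ) := by
  have hB0 : 0 ≤ B := le_trans (hfB 0 le_rfl).1 (hfB 0 le_rfl).2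
  set m : ℝ := (μ Set.univ).toReal with hm
  set IE : ℝ := ∫ x, E x ∂μ with hIE
  set Ig : ℝ := ∫ x, g x ∂μ with hIg
  have hm0 : 0 ≤ m := ENNReal.toReal_nonneg
  have hIE0 : 0 ≤ IE := integral_nonneg fun x => hE0 x
  have hgnn : ∀ x, 0 ≤ g x := fun x => by rw [hg x]; exact (hfB (E x) (hE0 x)).1
  have hgB : ∀ x, g x ≤ B := fun x => by rw [hg x]; exact (hfB (E x) (hE0 x)).2
  have hIg0 : 0 ≤ Ig := integral_nonneg hgnn
  have hgInt : Integrable (fun x => g x) μ := by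
    refine Integrable.mono' (integrable_const B) g.continuous.aestronglyMeasurable ?_
    filter_upwards with x
    rw [Real.norm_eq_abs, abs_of_nonneg (hgnn x)]
    exact hgB x
  have hmassM : Measurable fun p : X × X => ((K p.1 p.2) Set.univ).toReal :=
    mass_measurable hEc hEinf hK
  set F : X → X → ℝ := fun x₁ x₂ =>
    (f (E x₁ + E x₂) - f (E x₁) - f (E x₂)) * ((K x₁ x₂) Set.univ).toReal with hF
  set G : X → X → ℝ := fun x₁ x₂ =>
    c₁ * (g x₁ + g x₂) + c₂ * (E x₁ * g x₂ + E x₂ * g x₁) with hG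
  have hmass0 : ∀ x₁ x₂ : X, 0 ≤ ((K x₁ x₂) Set.univ).toReal :=
    fun _ _ => ENNReal.toReal_nonneg
  have hFG : ∀ x₁ x₂, F x₁ x₂ ≤ G x₁ x₂ := by
    intro x₁ x₂
    have h := hkey (E x₁) (E x₂) (hE0 x₁) (hE0 x₂) _ (hmass0 x₁ x₂) (hK.intensity x₁ x₂)
    simp only [hF, hG, hg x₁, hg x₂]
    exact h
  have hFabs : ∀ x₁ x₂, |F x₁ x₂| ≤ 3 * B * C * (1 + E x₁) + 3 * B * C * E x₂ := by
    intro x₁ x₂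
    have ha := hfB (E x₁) (hE0 x₁)
    have hb := hfB (E x₂) (hE0 x₂)
    have hab := hfB (E x₁ + E x₂) (by linarith [hE0 x₁, hE0 x₂])
    have h1 : |f (E x₁ + E x₂) - f (E x₁) - f (E x₂)| ≤ 3 * B := by
      rw [abs_le]; constructor <;> linarith [ha.1, ha.2, hb.1, hb.2, hab.1, hab.2]
    have h2 := hK.intensity x₁ x₂
    have h3 := hmass0 x₁ x₂
    simp only [hF]
    rw [abs_mul, abs_of_nonneg h3]
    calc |f (E x₁ + E x₂) - f (E x₁) - f (E x₂)| * ((K x₁ x₂) Set.univ).toReal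
        ≤ (3 * B) * (C * (1 + E x₁ + E x₂)) := mul_le_mul h1 h2 h3 (by positivity)
      _ = 3 * B * C * (1 + E x₁) + 3 * B * C * E x₂ := by ring
  have hFmeasP : Measurable fun p : X × X => F p.1 p.2 := by
    apply Measurable.mul _ hmassM
    exact (((hfc.comp ((hEc.comp continuous_fst).add (hEc.comp continuous_snd))).sub
      (hfc.comp (hEc.comp continuous_fst))).sub
      (hfc.comp (hEc.comp continuous_snd))).measurable
  have hboundInt : ∀ x₁ : X, Integrable
      (fun x₂ => 3 * B * C * (1 + E x₁) + 3 * B * C * E x₂) μ :=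
    fun x₁ => (integrable_const _).add (hEint.const_mul _)
  have hFi : ∀ x₁, Integrable (fun x₂ => F x₁ x₂) μ := by
    intro x₁
    refine Integrable.mono' (hboundInt x₁)
      ((hFmeasP.comp measurable_prodMk_left).aestronglyMeasurable) ?_
    filter_upwards with x₂
    rw [Real.norm_eq_abs]
    exact hFabs x₁ x₂
  have hGi : ∀ x₁, Integrable (fun x₂ => G x₁ x₂) μ := by
    intro x₁
    apply Integrable.add
    · exact ((integrable_const (g x₁)).add hgInt).const_mul c₁
    · exact ((hgInt.const_mul (E x₁)).add (hEint.mul_const (g x₁))).const_mul c₂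
  have hGval : ∀ x₁, ∫ x₂, G x₁ x₂ ∂μ
      = c₁ * (g x₁ * m + Ig) + c₂ * (E x₁ * Ig + IE * g x₁) := by
    intro x₁
    have iA : Integrable (fun x₂ : X => g x₁ + g x₂) μ := (integrable_const _).add hgInt
    have iB : Integrable (fun x₂ : X => E x₁ * g x₂ + E x₂ * g x₁) μ :=
      (hgInt.const_mul _).add (hEint.mul_const _)
    have iA' : Integrable (fun x₂ : X => c₁ * (g x₁ + g x₂)) μ := iA.const_mul _
    have iB' : Integrable (fun x₂ : X => c₂ * (E x₁ * g x₂ + E x₂ * g x₁)) μ := iB.const_mul _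
    simp only [hG]
    simp only [integral_add iA' iB', integral_const_mul,
      integral_add (integrable_const (g x₁)) hgInt,
      integral_add (hgInt.const_mul (E x₁)) (hEint.mul_const (g x₁)),
      integral_const, integral_mul_const, smul_eq_mul, measureReal_def, ← hm]
    ring
  have hinner_le : ∀ x₁, ∫ x₂, F x₁ x₂ ∂μ ≤ ∫ x₂, G x₁ x₂ ∂μ :=
    fun x₁ => integral_mono (hFi x₁) (hGi x₁) (hFG x₁)
  have houtSM : AEStronglyMeasurable (fun x₁ => ∫ x₂, F x₁ x₂ ∂μ) μ :=
    (hFmeasP.stronglyMeasurable.integral_prod_right').aestronglyMeasurable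
  have houtInt : Integrable (fun x₁ => ∫ x₂, F x₁ x₂ ∂μ) μ := by
    refine Integrable.mono'
      ((integrable_const (3 * B * C * m + 3 * B * C * IE)).add
        (hEint.const_mul (3 * B * C * m))) houtSM ?_
    filter_upwards with x₁
    have h1 : ‖∫ x₂, F x₁ x₂ ∂μ‖ ≤ ∫ x₂, ‖F x₁ x₂‖ ∂μ := norm_integral_le_integral_norm _
    have h2 : ∫ x₂, ‖F x₁ x₂‖ ∂μ
        ≤ ∫ x₂, (3 * B * C * (1 + E x₁) + 3 * B * C * E x₂) ∂μ := by
      apply integral_mono (hFi x₁).norm (hboundInt x₁)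
      intro x₂
      simpa [Real.norm_eq_abs] using hFabs x₁ x₂
    have h3 : ∫ x₂, (3 * B * C * (1 + E x₁) + 3 * B * C * E x₂) ∂μ
        = 3 * B * C * (1 + E x₁) * m + 3 * B * C * IE := by
      simp only [integral_add (integrable_const (3 * B * C * (1 + E x₁)))
        (hEint.const_mul (3 * B * C)), integral_const, integral_const_mul, smul_eq_mul,
          measureReal_def, ← hm]
      ring
    calc ‖∫ x₂, F x₁ x₂ ∂μ‖ ≤ 3 * B * C * (1 + E x₁) * m + 3 * B * C * IE := by
          rw [← h3]; exact h1.trans h2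
      _ = 3 * B * C * m + 3 * B * C * IE + 3 * B * C * m * E x₁ := by ring
  have hHInt : Integrable
      (fun x₁ => c₁ * (g x₁ * m + Ig) + c₂ * (E x₁ * Ig + IE * g x₁)) μ := by
    apply Integrable.add
    · exact ((hgInt.mul_const m).add (integrable_const Ig)).const_mul c₁
    · exact ((hEint.mul_const Ig).add (hgInt.const_mul IE)).const_mul c₂
  calc ∫ x₁, ∫ x₂, ∫ y, (g y - g x₁ - g x₂) ∂(K x₁ x₂) ∂μ ∂μ
      = ∫ x₁, ∫ x₂, F x₁ x₂ ∂μ ∂μ := by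
        apply integral_congr_ae
        filter_upwards with x₁
        apply integral_congr_ae
        filter_upwards with x₂
        rw [inner_eq hK f g hg x₁ x₂]
    _ ≤ ∫ x₁, (c₁ * (g x₁ * m + Ig) + c₂ * (E x₁ * Ig + IE * g x₁)) ∂μ := by
        apply integral_mono houtInt hHInt
        intro x₁
        exact (hinner_le x₁).trans (le_of_eq (hGval x₁))
    _ = (c₁ * m + c₂ * IE) * (2 * Ig) := by
        have jA : Integrable (fun x₁ : X => g x₁ * m + Ig) μ :=
          (hgInt.mul_const m).add (integrable_const Ig)
        have jB : Integrable (fun x₁ : X => E x₁ * Ig + IE * g x₁) μ :=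
          (hEint.mul_const Ig).add (hgInt.const_mul IE)
        have jA' : Integrable (fun x₁ : X => c₁ * (g x₁ * m + Ig)) μ := jA.const_mul _
        have jB' : Integrable (fun x₁ : X => c₂ * (E x₁ * Ig + IE * g x₁)) μ := jB.const_mul _
        simp only [integral_add jA' jB', integral_const_mul,
          integral_add (hgInt.mul_const m) (integrable_const Ig),
          integral_add (hEint.mul_const Ig) (hgInt.const_mul IE),
          integral_const, integral_mul_const, smul_eq_mul, measureReal_def, ← hm]
        ring


end CoagAux

open CoagAux

/-- The rate-of-growth estimate for the `β`-moment of the solution: for every `t > 0`,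
`sup_{s≤t} ∫ E^β dμ_s ≤ c ∫ E^β dμ₀`, with `c` depending only on `C`, `t`, `β` and the
bound `e` on `∫ (1+E) dμ₀`. -/
theorem stmt1
    (E : X → ℝ) (hEc : Continuous E) (hE0 : ∀ x, 0 ≤ E x)
    (hEinf : Tendsto E (cocompact X) atTop)
    (C t β e : ℝ) (hC : 0 < C) (ht : 0 < t) (hβ : 2 ≤ β) :
    ∃ c : ℝ, ∀ K : X → X → Measure X, IsCoagKernel E C K →
      ∀ (μ₀ : Measure X) (μ : ℝ → Measure X), IsFiniteMeasure μ₀ →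
        ∫⁻ y, ENNReal.ofReal (1 + E y ^ β) ∂μ₀ < ⊤ →
        ∫⁻ y, ENNReal.ofReal (1 + E y) ∂μ₀ ≤ ENNReal.ofReal e →
        IsCoagSolution E K μ₀ μ → MomentBounded E β μ →
        ∀ s ∈ Set.Icc (0:ℝ) t,
          ∫⁻ y, ENNReal.ofReal (E y ^ β) ∂(μ s)
            ≤ ENNReal.ofReal c * ∫⁻ y, ENNReal.ofReal (E y ^ β) ∂μ₀ := by
  have hβ1 : (1:ℝ) ≤ β := by linarith
  have hC0 : (0:ℝ) ≤ C := hC.le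
  set e' : ℝ := max e 0 with he'
  have he'0 : 0 ≤ e' := le_max_right _ _
  have h2β0 : (0:ℝ) ≤ 2 ^ β := Real.rpow_nonneg (by norm_num) _
  set A : ℝ := 3 * C * 2 ^ β * e' with hA
  have hA0 : 0 ≤ A := by positivity
  refine ⟨Real.exp (A * t), ?_⟩
  intro K hK μ₀ μ hμ₀fin _hmom₀ hfirst hsol _hmb s hs
  obtain ⟨hinit, hfin, hderiv⟩ := hsol
  haveI : ∀ u : ℝ, IsFiniteMeasure (μ u) := hfin
  haveI := hμ₀fin
  -- the cut-off linear test functions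
  set gL : ℕ → C₀(X, ℝ) := fun m => mkC0 E hEc hEinf (tentLin m) (tentLin_cont m)
    (2 * m) (fun r hr => tentLin_zero m hr) with hgL
  have hgLapp : ∀ m x, (gL m) x = tentLin m (E x) := fun m x => rfl
  -- Step 1: the first moment does not increase
  have hstep1 : ∀ m : ℕ, ∀ u : ℝ, 0 ≤ u →
      ∫ x, (gL m) x ∂(μ u) ≤ ∫ x, (gL m) x ∂μ₀ := by
    intro m u hu
    have hgr := gronwall_aux (fun v => ∫ x, (gL m) x ∂(μ v))
      (fun v => (1/2) * ∫ x₁, ∫ x₂, ∫ y,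
        ((gL m) y - (gL m) x₁ - (gL m) x₂) ∂(K x₁ x₂) ∂(μ v) ∂(μ v)) 0
      (fun v hv => hderiv (gL m) v hv) ?_ hu
    · simpa only [zero_mul, Real.exp_zero, one_mul, hinit] using hgr
    · intro v _hv
      rw [zero_mul]
      have hle0 : ∫ x₁, ∫ x₂, ∫ y,
          ((gL m) y - (gL m) x₁ - (gL m) x₂) ∂(K x₁ x₂) ∂(μ v) ∂(μ v) ≤ 0 := by
        apply integral_nonpos
        intro x₁
        apply integral_nonpos
        intro x₂
        show ∫ y, ((gL m) y - (gL m) x₁ - (gL m) x₂) ∂(K x₁ x₂) ≤ 0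
        rw [inner_eq hK (tentLin m) (gL m) (hgLapp m) x₁ x₂]
        apply mul_nonpos_of_nonpos_of_nonneg _ ENNReal.toReal_nonneg
        have := tentLin_subadd m (hE0 x₁) (hE0 x₂)
        linarith
      linarith
  -- integrability of the cut-off functions
  have hgLint : ∀ m : ℕ, ∀ ν : Measure X, IsFiniteMeasure ν →
      Integrable (fun x => (gL m) x) ν := by
    intro m ν hν
    haveI := hν
    refine Integrable.mono' (integrable_const (2 * (m:ℝ)))
      (gL m).continuous.aestronglyMeasurable ?_
    filter_upwards with x
    rw [hgLapp, Real.norm_eq_abs, abs_of_nonneg (tentLin_nonneg m (E x))]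
    exact tentLin_bdd m (hE0 x)
  -- Step 2: lintegral first-moment bound at all nonneg times
  have hfm : ∀ u : ℝ, 0 ≤ u →
      ∫⁻ x, ENNReal.ofReal (1 + E x) ∂(μ u) ≤ ENNReal.ofReal e := by
    intro u hu
    have hmct : ∫⁻ x, ENNReal.ofReal (1 + E x) ∂(μ u)
        = ⨆ m : ℕ, ∫⁻ x, ENNReal.ofReal (tentLin m (E x)) ∂(μ u) := by
      rw [← lintegral_iSup]
      · apply lintegral_congr
        intro x
        apply le_antisymm
        · obtain ⟨m, hm⟩ := exists_nat_ge (E x + 1)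
          refine le_iSup_of_le m ?_
          rw [tentLin_eventually (hE0 x) hm]
        · exact iSup_le fun m => ENNReal.ofReal_le_ofReal (tentLin_le m (hE0 x))
      · intro m
        exact (((tentLin_cont m).comp hEc).measurable).ennreal_ofReal
      · intro m m' hmm' x
        exact ENNReal.ofReal_le_ofReal (tentLin_mono (E x) hmm')
    rw [hmct]
    apply iSup_le
    intro m
    have h1 : ∫⁻ x, ENNReal.ofReal (tentLin m (E x)) ∂(μ u)
        = ENNReal.ofReal (∫ x, (gL m) x ∂(μ u)) := by
      rw [ofReal_integral_eq_lintegral_ofReal (hgLint m (μ u) (hfin u))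
        (Filter.Eventually.of_forall fun x => tentLin_nonneg m (E x))]
      simp only [hgLapp]
    have h2 : ENNReal.ofReal (∫ x, (gL m) x ∂μ₀)
        = ∫⁻ x, ENNReal.ofReal (tentLin m (E x)) ∂μ₀ := by
      rw [ofReal_integral_eq_lintegral_ofReal (hgLint m μ₀ hμ₀fin)
        (Filter.Eventually.of_forall fun x => tentLin_nonneg m (E x))]
      simp only [hgLapp]
    calc ∫⁻ x, ENNReal.ofReal (tentLin m (E x)) ∂(μ u)
        = ENNReal.ofReal (∫ x, (gL m) x ∂(μ u)) := h1
      _ ≤ ENNReal.ofReal (∫ x, (gL m) x ∂μ₀) :=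
          ENNReal.ofReal_le_ofReal (hstep1 m u hu)
      _ = ∫⁻ x, ENNReal.ofReal (tentLin m (E x)) ∂μ₀ := h2
      _ ≤ ∫⁻ x, ENNReal.ofReal (1 + E x) ∂μ₀ :=
          lintegral_mono fun x => ENNReal.ofReal_le_ofReal (tentLin_le m (hE0 x))
      _ ≤ ENNReal.ofReal e := hfirst
  -- Step 3: integrability of E and the combined first-moment bound
  have hEint : ∀ u : ℝ, 0 ≤ u → Integrable E (μ u) := by
    intro u hu
    refine ⟨hEc.aestronglyMeasurable, ?_⟩
    rw [hasFiniteIntegral_iff_norm]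
    calc ∫⁻ x, ENNReal.ofReal ‖E x‖ ∂(μ u)
        ≤ ∫⁻ x, ENNReal.ofReal (1 + E x) ∂(μ u) := by
          apply lintegral_mono
          intro x
          apply ENNReal.ofReal_le_ofReal
          rw [Real.norm_eq_abs, abs_of_nonneg (hE0 x)]
          linarith
      _ ≤ ENNReal.ofReal e := hfm u hu
      _ < ⊤ := ENNReal.ofReal_lt_top
  have hsum : ∀ u : ℝ, 0 ≤ u →
      ((μ u) Set.univ).toReal + ∫ x, E x ∂(μ u) ≤ e' := by
    intro u hu
    have h1 : ∫ x, (1 + E x) ∂(μ u) = ((μ u) Set.univ).toReal + ∫ x, E x ∂(μ u) := by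
      rw [integral_add (integrable_const 1) (hEint u hu), integral_const, smul_eq_mul,
        mul_one]
      rfl
    have h2 : ∫ x, (1 + E x) ∂(μ u)
        = (∫⁻ x, ENNReal.ofReal (1 + E x) ∂(μ u)).toReal := by
      rw [integral_eq_lintegral_of_nonneg_ae (f := fun x => 1 + E x)
        (Filter.Eventually.of_forall fun x => by have := hE0 x; positivity)
        ((continuous_const.add hEc).aestronglyMeasurable)]
    have h3 : (∫⁻ x, ENNReal.ofReal (1 + E x) ∂(μ u)).toReal
        ≤ (ENNReal.ofReal e).toReal :=
      ENNReal.toReal_mono ENNReal.ofReal_ne_top (hfm u hu)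
    have h4 : (ENNReal.ofReal e).toReal ≤ e' := by
      rcases le_total 0 e with he | he
      · rw [ENNReal.toReal_ofReal he]; exact le_max_left _ _
      · rw [ENNReal.ofReal_of_nonpos he]; simpa using he'0
    have h5 := h3.trans h4
    rw [← h2] at h5
    rw [h1] at h5
    exact h5
  -- Step 4: the truncated power test functions
  set gP : ℕ → C₀(X, ℝ) := fun n => mkC0 E hEc hEinf (tentPow β (n+1))
    (tentPow_cont hβ1 (n+1)) (2 * (n+1))
    (fun r hr => tentPow_zero β (n+1) (by push_cast at hr ⊢; linarith)) with hgP
  have hgPapp : ∀ n x, (gP n) x = tentPow β (n+1) (E x) := fun n x => rfl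
  have hgPnn : ∀ n x, 0 ≤ (gP n) x := fun n x => tentPow_nonneg β (n+1) (E x)
  have hgPint : ∀ n : ℕ, ∀ ν : Measure X, IsFiniteMeasure ν →
      Integrable (fun x => (gP n) x) ν := by
    intro n ν hν
    haveI := hν
    refine Integrable.mono' (integrable_const (((n:ℝ)+1) ^ (β-1) * (2 * ((n:ℝ)+1))))
      (gP n).continuous.aestronglyMeasurable ?_
    filter_upwards with x
    rw [hgPapp, Real.norm_eq_abs, abs_of_nonneg (tentPow_nonneg β (n+1) (E x))]
    have := tentPow_bdd (β := β) (n+1) (hE0 x)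
    push_cast at this ⊢
    linarith
  have hφ0 : ∀ n u, 0 ≤ ∫ x, (gP n) x ∂(μ u) :=
    fun n u => integral_nonneg (hgPnn n)
  -- Step 5: Gronwall for the truncated power moments
  have hgron : ∀ n : ℕ, ∫ x, (gP n) x ∂(μ s) ≤ Real.exp (A * t) * ∫ x, (gP n) x ∂μ₀ := by
    intro n
    have hd := gronwall_aux (fun v => ∫ x, (gP n) x ∂(μ v))
      (fun v => (1/2) * ∫ x₁, ∫ x₂, ∫ y,
        ((gP n) y - (gP n) x₁ - (gP n) x₂) ∂(K x₁ x₂) ∂(μ v) ∂(μ v)) A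
      (fun v hv => hderiv (gP n) v hv) ?_ hs.1
    · have hexp : Real.exp (A * s) ≤ Real.exp (A * t) :=
        Real.exp_le_exp.2 (mul_le_mul_of_nonneg_left hs.2 hA0)
      simp only [hinit] at hd
      calc ∫ x, (gP n) x ∂(μ s) ≤ Real.exp (A * s) * ∫ x, (gP n) x ∂μ₀ := hd
        _ ≤ Real.exp (A * t) * ∫ x, (gP n) x ∂μ₀ :=
            mul_le_mul_of_nonneg_right hexp (integral_nonneg (hgPnn n))
    · intro v hv
      have hkey : ∀ a b : ℝ, 0 ≤ a → 0 ≤ b → ∀ k : ℝ, 0 ≤ k → k ≤ C * (1 + a + b) →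
          (tentPow β (n+1) (a + b) - tentPow β (n+1) a - tentPow β (n+1) b) * k
            ≤ (C * 2 ^ β * 2) * (tentPow β (n+1) a + tentPow β (n+1) b)
              + (C * 2 ^ β * 3) * (a * tentPow β (n+1) b + b * tentPow β (n+1) a) := by
        intro a b ha hb k hk hkC
        have h := tentPow_key hβ (Nat.le_add_left 1 n) ha hb hk hkC
        exact h.trans (le_of_eq (by ring))
      have hdle := double_integral_le hEc hE0 hEinf hK (μ v) (hEint v hv)
        (tentPow β (n+1)) (tentPow_cont hβ1 (n+1)) (gP n) (hgPapp n)
        (((n:ℝ)+1) ^ (β-1) * (2 * ((n:ℝ)+1)))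
        (fun r hr => ⟨tentPow_nonneg β (n+1) r, by
          have := tentPow_bdd (β := β) (n+1) hr
          push_cast at this ⊢
          linarith⟩)
        (C * 2 ^ β * 2) (C * 2 ^ β * 3) hC0 hkey
      have hcoef : (C * 2 ^ β * 2) * ((μ v) Set.univ).toReal
          + (C * 2 ^ β * 3) * ∫ x, E x ∂(μ v) ≤ A := by
        have hm0 : 0 ≤ ((μ v) Set.univ).toReal := ENNReal.toReal_nonneg
        have hIE0 : 0 ≤ ∫ x, E x ∂(μ v) := integral_nonneg fun x => hE0 x
        have hsv := hsum v hv
        have hCp : 0 ≤ C * 2 ^ β := mul_nonneg hC0 h2β0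
        have h1 : C * 2 ^ β * (((μ v) Set.univ).toReal + ∫ x, E x ∂(μ v))
            ≤ C * 2 ^ β * e' := mul_le_mul_of_nonneg_left hsv hCp
        have h2 : 0 ≤ C * 2 ^ β * ((μ v) Set.univ).toReal := mul_nonneg hCp hm0
        rw [hA]
        nlinarith [h1, h2]
      calc (1/2) * ∫ x₁, ∫ x₂, ∫ y,
            ((gP n) y - (gP n) x₁ - (gP n) x₂) ∂(K x₁ x₂) ∂(μ v) ∂(μ v)
          ≤ (1/2) * (((C * 2 ^ β * 2) * ((μ v) Set.univ).toReal
              + (C * 2 ^ β * 3) * ∫ x, E x ∂(μ v)) * (2 * ∫ x, (gP n) x ∂(μ v))) :=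
            mul_le_mul_of_nonneg_left hdle (by norm_num)
        _ = ((C * 2 ^ β * 2) * ((μ v) Set.univ).toReal
              + (C * 2 ^ β * 3) * ∫ x, E x ∂(μ v)) * ∫ x, (gP n) x ∂(μ v) := by ring
        _ ≤ A * ∫ x, (gP n) x ∂(μ v) :=
            mul_le_mul_of_nonneg_right hcoef (hφ0 n v)
  -- Step 6: pass to the limit
  have hmct2 : ∫⁻ x, ENNReal.ofReal (E x ^ β) ∂(μ s)
      = ⨆ n : ℕ, ∫⁻ x, ENNReal.ofReal (tentPow β (n+1) (E x)) ∂(μ s) := by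
    rw [← lintegral_iSup]
    · apply lintegral_congr
      intro x
      apply le_antisymm
      · obtain ⟨n, hn⟩ := exists_nat_ge (E x)
        refine le_iSup_of_le n ?_
        rw [tentPow_eventually hβ1 (hE0 x) (Nat.le_add_left 1 n)
          (by push_cast; linarith : E x ≤ ((n:ℕ)+1 : ℕ))]
      · exact iSup_le fun n =>
          ENNReal.ofReal_le_ofReal (tentPow_le β (n+1) (hE0 x))
    · intro n
      exact (((tentPow_cont hβ1 (n+1)).comp hEc).measurable).ennreal_ofReal
    · intro n n' hnn' x
      exact ENNReal.ofReal_le_ofReal (tentPow_mono hβ1 (E x) (by omega : n+1 ≤ n'+1))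
  rw [hmct2]
  apply iSup_le
  intro n
  have h1 : ∫⁻ x, ENNReal.ofReal (tentPow β (n+1) (E x)) ∂(μ s)
      = ENNReal.ofReal (∫ x, (gP n) x ∂(μ s)) := by
    rw [ofReal_integral_eq_lintegral_ofReal (hgPint n (μ s) (hfin s))
      (Filter.Eventually.of_forall fun x => tentPow_nonneg β (n+1) (E x))]
    simp only [hgPapp]
  have h2 : ENNReal.ofReal (∫ x, (gP n) x ∂μ₀)
      = ∫⁻ x, ENNReal.ofReal (tentPow β (n+1) (E x)) ∂μ₀ := by
    rw [ofReal_integral_eq_lintegral_ofReal (hgPint n μ₀ hμ₀fin)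
      (Filter.Eventually.of_forall fun x => tentPow_nonneg β (n+1) (E x))]
    simp only [hgPapp]
  calc ∫⁻ x, ENNReal.ofReal (tentPow β (n+1) (E x)) ∂(μ s)
      = ENNReal.ofReal (∫ x, (gP n) x ∂(μ s)) := h1
    _ ≤ ENNReal.ofReal (Real.exp (A * t) * ∫ x, (gP n) x ∂μ₀) :=
        ENNReal.ofReal_le_ofReal (hgron n)
    _ = ENNReal.ofReal (Real.exp (A * t)) * ENNReal.ofReal (∫ x, (gP n) x ∂μ₀) :=
        ENNReal.ofReal_mul (Real.exp_nonneg _)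
    _ = ENNReal.ofReal (Real.exp (A * t))
        * ∫⁻ x, ENNReal.ofReal (tentPow β (n+1) (E x)) ∂μ₀ := by rw [h2]
    _ ≤ ENNReal.ofReal (Real.exp (A * t)) * ∫⁻ x, ENNReal.ofReal (E x ^ β) ∂μ₀ := by
        apply mul_le_mul_right
        exact lintegral_mono fun x =>
          ENNReal.ofReal_le_ofReal (tentPow_le β (n+1) (hE0 x))
end

section
/- Let K be a coagulation kernel with constant C, and let 1 ≤ l ≤ m be real numbers. Then there is a constant c depending only on C, m and l such that for every h > 0, every n ≥ 1 and all points x₁,…,x_n ∈ X, writing Y := h(δ_{x₁}+⋯+δ_{x_n}), the following inequality holds: h · Σ_{1≤i<j≤n} ∫_X [ ((1+E^l, Y + h(δ_y − δ_{x_i} − δ_{x_j})))^m − ((1+E^l, Y))^m ] K(x_i,x_j;dy) ≤ c · (E,Y) · ((1+E^l, Y))^m. -/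
open MeasureTheory Filter Topology
open scoped ENNReal ZeroAtInfty

variable {X : Type*} [MetricSpace X] [CompleteSpace X] [SecondCountableTopology X]
  [LocallyCompactSpace X] [MeasurableSpace X] [BorelSpace X]

section Stmt3Aux
open Real


lemma aux_mvt {p A t : ℝ} (hp : 1 ≤ p) (hA : 0 ≤ A) (ht : 0 ≤ t) :
    (A + t) ^ p - A ^ p ≤ p * (A + t) ^ (p - 1) * t := by
  have hd : ∀ z ∈ Set.Icc A (A + t),
      HasDerivWithinAt (fun z : ℝ => z ^ p) (p * z ^ (p - 1)) (Set.Icc A (A + t)) z :=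
    fun z _ => (Real.hasDerivAt_rpow_const (Or.inr hp)).hasDerivWithinAt
  have hb : ∀ z ∈ Set.Icc A (A + t), ‖p * z ^ (p - 1)‖ ≤ p * (A + t) ^ (p - 1) := by
    intro z hz
    have hz0 : 0 ≤ z := le_trans hA hz.1
    rw [Real.norm_eq_abs, abs_of_nonneg (by positivity)]
    have := Real.rpow_le_rpow hz0 hz.2 (by linarith : (0:ℝ) ≤ p - 1)
    nlinarith
  have := (convex_Icc A (A + t)).norm_image_sub_le_of_norm_hasDerivWithin_le hd hb
    (Set.left_mem_Icc.2 (by linarith)) (Set.right_mem_Icc.2 (by linarith))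
  rw [show A + t - A = t by ring, Real.norm_eq_abs, Real.norm_eq_abs,
    abs_of_nonneg ht] at this
  exact le_trans (le_abs_self _) this

lemma pow_lin_bound {l b : ℝ} (hl : 1 ≤ l) (hb : 0 ≤ b) : b ^ (l - 1) ≤ 1 + b ^ l := by
  rcases le_total b 1 with h1 | h1
  · have := Real.rpow_le_one hb h1 (by linarith : (0:ℝ) ≤ l - 1)
    have : (0:ℝ) ≤ b ^ l := Real.rpow_nonneg hb l
    linarith [Real.rpow_le_one hb h1 (by linarith : (0:ℝ) ≤ l - 1)]
  · have := Real.rpow_le_rpow_of_exponent_le h1 (by linarith : l - 1 ≤ l)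
    linarith

-- δ(1+a+b) ≤ 3 l 2^(l-1) (a(1+b^l)+b(1+a^l)), where δ = (a+b)^l - a^l - b^l - 1
lemma key_half {l a b : ℝ} (hl : 1 ≤ l) (ha : 0 ≤ a) (hb : 0 ≤ b) (hab : a ≤ b) :
    ((a + b) ^ l - a ^ l - b ^ l - 1) * (1 + a + b)
      ≤ 3 * l * 2 ^ (l - 1) * (a * (1 + b ^ l) + b * (1 + a ^ l)) := by
  have hl0 : (0:ℝ) < l := by linarith
  have hbl : 0 ≤ b ^ l := Real.rpow_nonneg hb l
  have hal : 0 ≤ a ^ l := Real.rpow_nonneg ha l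
  have h2l : (0:ℝ) ≤ 2 ^ (l - 1) := Real.rpow_nonneg (by norm_num) _
  have hbl1 : 0 ≤ b ^ (l - 1) := Real.rpow_nonneg hb _
  -- δ ≤ l * 2^(l-1) * (a * b^(l-1))
  have hδ : (a + b) ^ l - a ^ l - b ^ l - 1 ≤ l * 2 ^ (l - 1) * (a * b ^ (l - 1)) := by
    have h1 : (b + a) ^ l - b ^ l ≤ l * (b + a) ^ (l - 1) * a := aux_mvt hl hb ha
    have h2 : (b + a) ^ (l - 1) ≤ 2 ^ (l - 1) * b ^ (l - 1) := by
      have : (b + a) ^ (l - 1) ≤ (2 * b) ^ (l - 1) :=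
        Real.rpow_le_rpow (by linarith) (by linarith) (by linarith)
      rwa [Real.mul_rpow (by norm_num) hb] at this
    have h3 : l * (b + a) ^ (l - 1) * a ≤ l * (2 ^ (l - 1) * b ^ (l - 1)) * a := by
      have := mul_le_mul_of_nonneg_left h2 hl0.le
      exact mul_le_mul_of_nonneg_right this ha
    have hba : (a + b) = (b + a) := by ring
    rw [hba]
    nlinarith
  have hmul : ((a + b) ^ l - a ^ l - b ^ l - 1) * (1 + a + b)
      ≤ l * 2 ^ (l - 1) * (a * b ^ (l - 1)) * (1 + a + b) :=
    mul_le_mul_of_nonneg_right hδ (by linarith)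
  -- a * b^(l-1) * (1 + a + b) ≤ 3 * (a*(1+b^l) + b*(1+a^l))
  have hcore : a * b ^ (l - 1) * (1 + a + b) ≤ 3 * (a * (1 + b ^ l) + b * (1 + a ^ l)) := by
    have hb1 : b ^ (l - 1) ≤ 1 + b ^ l := pow_lin_bound hl hb
    have hblb : b ^ (l - 1) * b ≤ 1 + b ^ l := by
      rcases eq_or_lt_of_le hb with rfl | hb'
      · simp only [mul_zero]; positivity
      · rw [← Real.rpow_add_one (ne_of_gt hb'), show l - 1 + 1 = l by ring]
        linarith
    -- a*b^(l-1)*(1+a+b) = a*b^(l-1) + a*(a*b^(l-1)) + a*(b^(l-1)*b)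
    have t1 : a * b ^ (l - 1) ≤ a * (1 + b ^ l) := mul_le_mul_of_nonneg_left hb1 ha
    have t2 : a * (a * b ^ (l - 1)) ≤ a * (b * b ^ (l - 1)) := by
      have := mul_le_mul_of_nonneg_right hab hbl1
      exact mul_le_mul_of_nonneg_left this ha
    have t3 : a * (b * b ^ (l - 1)) ≤ a * (1 + b ^ l) := by
      have : b * b ^ (l - 1) ≤ 1 + b ^ l := by rw [mul_comm]; exact hblb
      exact mul_le_mul_of_nonneg_left this ha
    have t4 : a * (b ^ (l - 1) * b) ≤ a * (1 + b ^ l) := mul_le_mul_of_nonneg_left hblb ha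
    have hb0 : 0 ≤ b * (1 + a ^ l) := by positivity
    nlinarith
  have h0 : (0:ℝ) ≤ l * 2 ^ (l - 1) := by positivity
  nlinarith [mul_le_mul_of_nonneg_left hcore h0]

lemma key_delta {l a b : ℝ} (hl : 1 ≤ l) (ha : 0 ≤ a) (hb : 0 ≤ b) :
    ((a + b) ^ l - a ^ l - b ^ l - 1) * (1 + a + b)
      ≤ 3 * l * 2 ^ (l - 1) * (a * (1 + b ^ l) + b * (1 + a ^ l)) := by
  rcases le_total a b with hab | hab
  · exact key_half hl ha hb hab
  · have := key_half hl hb ha hab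
    have e1 : b + a = a + b := by ring
    rw [e1] at this
    linarith

lemma pair_bound {C l m h S a b M : ℝ} (hC : 0 < C) (hl : 1 ≤ l) (hlm : l ≤ m)
    (hh : 0 < h) (ha : 0 ≤ a) (hb : 0 ≤ b) (hM0 : 0 ≤ M) (hM : M ≤ C * (1 + a + b))
    (hSab : h * (1 + a ^ l) + h * (1 + b ^ l) ≤ S) :
    M * ((S + h * ((1 + (a + b) ^ l) - (1 + a ^ l) - (1 + b ^ l))) ^ m - S ^ m)
      ≤ 3 * C * m * l * 2 ^ (l - 1) * (1 + 2 ^ l) ^ (m - 1) * S ^ (m - 1) * h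
          * (a * (1 + b ^ l) + b * (1 + a ^ l)) := by
  have hm : 1 ≤ m := le_trans hl hlm
  have hal : 0 ≤ a ^ l := Real.rpow_nonneg ha l
  have hbl : 0 ≤ b ^ l := Real.rpow_nonneg hb l
  have habl : 0 ≤ (a + b) ^ l := Real.rpow_nonneg (by linarith) l
  have h2l : (0:ℝ) ≤ 2 ^ l := Real.rpow_nonneg (by norm_num) l
  have h2l1 : (0:ℝ) ≤ 2 ^ (l - 1) := Real.rpow_nonneg (by norm_num) _
  set δ : ℝ := (a + b) ^ l - a ^ l - b ^ l - 1 with hδdef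
  have hbr : (1 + (a + b) ^ l) - (1 + a ^ l) - (1 + b ^ l) = δ := by rw [hδdef]; ring
  rw [hbr]
  have hS0 : 0 < S := lt_of_lt_of_le (by nlinarith) hSab
  have hSm1 : 0 ≤ S ^ (m - 1) := Real.rpow_nonneg hS0.le _
  have hbase : 0 ≤ S + h * δ := by
    have : h * δ = h * (1 + (a + b) ^ l) - h * (1 + a ^ l) - h * (1 + b ^ l) := by
      rw [hδdef]; ring
    nlinarith
  have hRHS0 : 0 ≤ 3 * C * m * l * 2 ^ (l - 1) * (1 + 2 ^ l) ^ (m - 1) * S ^ (m - 1) * h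
      * (a * (1 + b ^ l) + b * (1 + a ^ l)) := by
    have : (0:ℝ) ≤ (1 + 2 ^ l) ^ (m - 1) := Real.rpow_nonneg (by linarith) _
    positivity
  rcases le_total δ 0 with hδ0 | hδ0
  · have h1 : (S + h * δ) ^ m ≤ S ^ m :=
      Real.rpow_le_rpow hbase (by nlinarith) (by linarith)
    have : M * ((S + h * δ) ^ m - S ^ m) ≤ 0 :=
      mul_nonpos_of_nonneg_of_nonpos hM0 (by linarith)
    linarith
  · -- δ ≥ 0
    have hhδ : 0 ≤ h * δ := mul_nonneg hh.le hδ0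
    have hmvt : (S + h * δ) ^ m - S ^ m ≤ m * (S + h * δ) ^ (m - 1) * (h * δ) :=
      aux_mvt hm hS0.le hhδ
    have hup : S + h * δ ≤ (1 + 2 ^ l) * S := by
      have key : δ ≤ 2 ^ l * (1 + a ^ l) + 2 ^ l * (1 + b ^ l) := by
        rcases le_total a b with hab | hab
        · have : (a + b) ^ l ≤ (2 * b) ^ l :=
            Real.rpow_le_rpow (by linarith) (by linarith) (by linarith)
          rw [Real.mul_rpow (by norm_num) hb] at this
          nlinarith
        · have : (a + b) ^ l ≤ (2 * a) ^ l :=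
            Real.rpow_le_rpow (by linarith) (by linarith) (by linarith)
          rw [Real.mul_rpow (by norm_num) ha] at this
          nlinarith
      have k1 : h * δ ≤ h * (2 ^ l * (1 + a ^ l) + 2 ^ l * (1 + b ^ l)) :=
        mul_le_mul_of_nonneg_left key hh.le
      have k2 : 2 ^ l * (h * (1 + a ^ l) + h * (1 + b ^ l)) ≤ 2 ^ l * S :=
        mul_le_mul_of_nonneg_left hSab h2l
      nlinarith [k1, k2]
    have h2 : (S + h * δ) ^ (m - 1) ≤ (1 + 2 ^ l) ^ (m - 1) * S ^ (m - 1) := by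
      have := Real.rpow_le_rpow hbase hup (by linarith : (0:ℝ) ≤ m - 1)
      rwa [Real.mul_rpow (by linarith) hS0.le] at this
    have h3 : (S + h * δ) ^ m - S ^ m
        ≤ m * ((1 + 2 ^ l) ^ (m - 1) * S ^ (m - 1)) * (h * δ) := by
      have := mul_le_mul_of_nonneg_right
        (mul_le_mul_of_nonneg_left h2 (by linarith : (0:ℝ) ≤ m)) hhδ
      linarith
    have hc0 : 0 ≤ (S + h * δ) ^ m - S ^ m := by
      have := Real.rpow_le_rpow hS0.le (by linarith : S ≤ S + h * δ) (by linarith : (0:ℝ) ≤ m)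
      linarith
    have h4 : M * ((S + h * δ) ^ m - S ^ m)
        ≤ (C * (1 + a + b)) * (m * ((1 + 2 ^ l) ^ (m - 1) * S ^ (m - 1)) * (h * δ)) :=
      mul_le_mul hM h3 hc0 (by positivity)
    have h5 : (C * (1 + a + b)) * (m * ((1 + 2 ^ l) ^ (m - 1) * S ^ (m - 1)) * (h * δ))
        = (C * m * (1 + 2 ^ l) ^ (m - 1) * S ^ (m - 1) * h) * (δ * (1 + a + b)) := by ring
    have h6 : (C * m * (1 + 2 ^ l) ^ (m - 1) * S ^ (m - 1) * h) * (δ * (1 + a + b))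
        ≤ (C * m * (1 + 2 ^ l) ^ (m - 1) * S ^ (m - 1) * h)
            * (3 * l * 2 ^ (l - 1) * (a * (1 + b ^ l) + b * (1 + a ^ l))) := by
      refine mul_le_mul_of_nonneg_left (key_delta hl ha hb) ?_
      have : (0:ℝ) ≤ (1 + 2 ^ l) ^ (m - 1) := Real.rpow_nonneg (by linarith) _
      positivity
    calc M * ((S + h * δ) ^ m - S ^ m)
        ≤ (C * m * (1 + 2 ^ l) ^ (m - 1) * S ^ (m - 1) * h) * (δ * (1 + a + b)) := by
          rw [← h5]; exact h4
      _ ≤ _ := by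
          refine le_trans h6 (le_of_eq ?_); ring

end Stmt3Aux

/-- The key generator estimate: for `Y = h(δ_{x₁} + ⋯ + δ_{x_n})`,
`h Σ_{i<j} ∫ [ (1+E^l, Y + h(δ_y − δ_{x_i} − δ_{x_j}))^m − (1+E^l, Y)^m ] K(x_i,x_j;dy)
  ≤ c (E,Y) (1+E^l,Y)^m`,
where the pairings are written out explicitly as finite sums and `c` depends only on
`C`, `m` and `l`. -/
theorem stmt3
    (E : X → ℝ) (hEc : Continuous E) (hE0 : ∀ x, 0 ≤ E x)
    (hEinf : Tendsto E (cocompact X) atTop)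
    (C l m : ℝ) (hC : 0 < C) (hl : 1 ≤ l) (hlm : l ≤ m) :
    ∃ c : ℝ, ∀ K : X → X → Measure X, IsCoagKernel E C K →
      ∀ h : ℝ, 0 < h → ∀ n : ℕ, 1 ≤ n → ∀ x : Fin n → X,
        h * ∑ p ∈ Finset.univ.filter (fun p : Fin n × Fin n => p.1 < p.2),
            ∫ y, ((h * ∑ i, (1 + E (x i) ^ l)
                  + h * ((1 + E y ^ l) - (1 + E (x p.1) ^ l) - (1 + E (x p.2) ^ l))) ^ m
                 - (h * ∑ i, (1 + E (x i) ^ l)) ^ m) ∂(K (x p.1) (x p.2))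
          ≤ c * (h * ∑ i, E (x i)) * (h * ∑ i, (1 + E (x i) ^ l)) ^ m := by
  classical
  set κ : ℝ := 3 * C * m * l * 2 ^ (l - 1) * (1 + 2 ^ l) ^ (m - 1) with hκ
  refine ⟨2 * κ, ?_⟩
  intro K hK h hh n hn x
  have hm : 1 ≤ m := le_trans hl hlm
  have hκ0 : 0 ≤ κ := by
    have h1 : (0:ℝ) ≤ 2 ^ (l - 1) := Real.rpow_nonneg (by norm_num) _
    have h2 : (0:ℝ) ≤ 2 ^ l := Real.rpow_nonneg (by norm_num) _
    have h3 : (0:ℝ) ≤ (1 + 2 ^ l) ^ (m - 1) := Real.rpow_nonneg (by linarith) _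
    rw [hκ]; positivity
  set T : ℝ := ∑ i, (1 + E (x i) ^ l) with hT
  set R : ℝ := ∑ i, E (x i) with hR
  set S : ℝ := h * T with hS
  have hterm : ∀ i, (0:ℝ) ≤ 1 + E (x i) ^ l := fun i => by
    have := Real.rpow_nonneg (hE0 (x i)) l; linarith
  have hT1 : (1:ℝ) ≤ T := by
    have i0 : Fin n := ⟨0, hn⟩
    calc (1:ℝ) ≤ 1 + E (x i0) ^ l := by
          have := Real.rpow_nonneg (hE0 (x i0)) l; linarith
      _ ≤ T := Finset.single_le_sum (fun i _ => hterm i) (Finset.mem_univ i0)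
  have hS0 : 0 < S := by rw [hS]; nlinarith
  have hSm1 : 0 ≤ S ^ (m - 1) := Real.rpow_nonneg hS0.le _
  have hR0 : 0 ≤ R := Finset.sum_nonneg fun i _ => hE0 (x i)
  -- per-pair bound
  have pair : ∀ p ∈ Finset.univ.filter (fun p : Fin n × Fin n => p.1 < p.2),
      ∫ y, ((S + h * ((1 + E y ^ l) - (1 + E (x p.1) ^ l) - (1 + E (x p.2) ^ l))) ^ m
            - S ^ m) ∂(K (x p.1) (x p.2))
        ≤ κ * S ^ (m - 1) * h *
            (E (x p.1) * (1 + E (x p.2) ^ l) + E (x p.2) * (1 + E (x p.1) ^ l)) := by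
    intro p hp
    have hplt : p.1 < p.2 := (Finset.mem_filter.1 hp).2
    have hpne : p.1 ≠ p.2 := ne_of_lt hplt
    set a : ℝ := E (x p.1)
    set b : ℝ := E (x p.2)
    set μ : Measure X := K (x p.1) (x p.2) with hμ
    -- the integrand is a.e. constant
    have hae : ∀ᵐ y ∂μ, E y = a + b := by
      rw [MeasureTheory.ae_iff]
      exact hK.epreserve (x p.1) (x p.2)
    set c₀ : ℝ := (S + h * ((1 + (a + b) ^ l) - (1 + a ^ l) - (1 + b ^ l))) ^ m - S ^ m
      with hc₀
    have hint : (∫ y, ((S + h * ((1 + E y ^ l) - (1 + a ^ l) - (1 + b ^ l))) ^ m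
        - S ^ m) ∂μ) = (μ Set.univ).toReal * c₀ := by
      rw [MeasureTheory.integral_congr_ae (g := fun _ => c₀) ?_, MeasureTheory.integral_const,
        smul_eq_mul, MeasureTheory.measureReal_def]
      filter_upwards [hae] with y hy
      rw [hc₀, hy]
    rw [hint]
    have hSab : h * (1 + a ^ l) + h * (1 + b ^ l) ≤ S := by
      have hsub : ({p.1, p.2} : Finset (Fin n)) ⊆ Finset.univ := Finset.subset_univ _
      have := Finset.sum_le_sum_of_subset_of_nonneg hsub
        (fun i _ _ => hterm i)
      rw [Finset.sum_pair hpne] at this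
      rw [hS]
      calc h * (1 + a ^ l) + h * (1 + b ^ l)
          = h * ((1 + a ^ l) + (1 + b ^ l)) := by ring
        _ ≤ h * T := by
            exact mul_le_mul_of_nonneg_left this hh.le
    have := pair_bound hC hl hlm hh (hE0 (x p.1)) (hE0 (x p.2))
      ENNReal.toReal_nonneg (hK.intensity (x p.1) (x p.2)) hSab
    calc (μ Set.univ).toReal * c₀
        ≤ 3 * C * m * l * 2 ^ (l - 1) * (1 + 2 ^ l) ^ (m - 1) * S ^ (m - 1) * h
            * (a * (1 + b ^ l) + b * (1 + a ^ l)) := this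
      _ = κ * S ^ (m - 1) * h * (a * (1 + b ^ l) + b * (1 + a ^ l)) := by rw [hκ]
  -- sum the pair bounds
  have hsum : ∑ p ∈ Finset.univ.filter (fun p : Fin n × Fin n => p.1 < p.2),
      (E (x p.1) * (1 + E (x p.2) ^ l) + E (x p.2) * (1 + E (x p.1) ^ l)) ≤ 2 * (R * T) := by
    have h1 : ∑ p ∈ Finset.univ.filter (fun p : Fin n × Fin n => p.1 < p.2),
        (E (x p.1) * (1 + E (x p.2) ^ l) + E (x p.2) * (1 + E (x p.1) ^ l))
        ≤ ∑ p : Fin n × Fin n,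
        (E (x p.1) * (1 + E (x p.2) ^ l) + E (x p.2) * (1 + E (x p.1) ^ l)) := by
      refine Finset.sum_le_sum_of_subset_of_nonneg (Finset.filter_subset _ _) ?_
      intro p _ _
      have := hE0 (x p.1); have := hE0 (x p.2)
      have := hterm p.1; have := hterm p.2
      positivity
    refine le_trans h1 (le_of_eq ?_)
    rw [Fintype.sum_prod_type]
    simp only [Finset.sum_add_distrib, ← Finset.sum_mul, ← Finset.mul_sum]
    have e1 : (∑ _i : Fin n, (1:ℝ)) + ∑ i, E (x i) ^ l = T := by
      rw [hT, Finset.sum_add_distrib]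
    rw [e1, ← hR]
    ring
  have hpre : (0:ℝ) ≤ κ * S ^ (m - 1) * h := by positivity
  have hSm : S ^ (m - 1) * S = S ^ m := by
    have h1 := Real.rpow_add hS0 (m - 1) 1
    rw [sub_add_cancel, Real.rpow_one] at h1
    exact h1.symm
  calc h * ∑ p ∈ Finset.univ.filter (fun p : Fin n × Fin n => p.1 < p.2),
        ∫ y, ((S + h * ((1 + E y ^ l) - (1 + E (x p.1) ^ l) - (1 + E (x p.2) ^ l))) ^ m
              - S ^ m) ∂(K (x p.1) (x p.2))
      ≤ h * ∑ p ∈ Finset.univ.filter (fun p : Fin n × Fin n => p.1 < p.2),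
          κ * S ^ (m - 1) * h *
            (E (x p.1) * (1 + E (x p.2) ^ l) + E (x p.2) * (1 + E (x p.1) ^ l)) :=
        mul_le_mul_of_nonneg_left (Finset.sum_le_sum pair) hh.le
    _ = h * (κ * S ^ (m - 1) * h * ∑ p ∈ Finset.univ.filter
          (fun p : Fin n × Fin n => p.1 < p.2),
          (E (x p.1) * (1 + E (x p.2) ^ l) + E (x p.2) * (1 + E (x p.1) ^ l))) := by
        simp only [Finset.mul_sum]
    _ ≤ h * (κ * S ^ (m - 1) * h * (2 * (R * T))) := by
        exact mul_le_mul_of_nonneg_left (mul_le_mul_of_nonneg_left hsum hpre) hh.le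
    _ = 2 * κ * (h * R) * (S ^ (m - 1) * S) := by rw [hS]; ring
    _ = 2 * κ * (h * R) * S ^ m := by rw [hSm]
end

section
/- Let y ≥ 0, let g : (0,∞) → [0,∞) be nondecreasing, and let u : (0,∞) → ℝ be measurable with ∫₀^∞ u(x)² g(x)² dx < ∞. Then ∫₀^∞ (u(x+y) − u(x)) g(x)² u(x) dx ≤ 0 (the integral being well defined and its positive part finite). -/
open MeasureTheory Filter Topology
open scoped ENNReal

/-- For `y ≥ 0`, a nonnegative nondecreasing `g` on `(0,∞)` and measurable `u` with
`∫ u² g² < ∞`, one has `∫₀^∞ (u(x+y) − u(x)) g(x)² u(x) dx ≤ 0`, the integrand being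
integrable. -/
theorem stmt13 (y : ℝ) (hy : 0 ≤ y) (g u : ℝ → ℝ)
    (hg0 : ∀ x > (0:ℝ), 0 ≤ g x) (hgmono : MonotoneOn g (Set.Ioi 0))
    (hgm : Measurable g) (hum : Measurable u)
    (hL2 : ∫⁻ x in Set.Ioi (0:ℝ), ENNReal.ofReal ((u x) ^ 2 * (g x) ^ 2) < ⊤) :
    IntegrableOn (fun x => (u (x + y) - u x) * (g x) ^ 2 * u x) (Set.Ioi 0) ∧
    ∫ x in Set.Ioi (0:ℝ), (u (x + y) - u x) * (g x) ^ 2 * u x ≤ 0 := by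
  have huy : Measurable (fun x => u (x + y)) := hum.comp (measurable_id.add_const y)
  -- B² = u x ^ 2 * g x ^ 2, A² = u (x+y) ^ 2 * g x ^ 2
  set B2 : ℝ → ℝ := fun x => u x ^ 2 * g x ^ 2 with hB2def
  set A2 : ℝ → ℝ := fun x => u (x + y) ^ 2 * g x ^ 2 with hA2def
  have hB2m : Measurable B2 := (hum.pow_const 2).mul (hgm.pow_const 2)
  have hA2m : Measurable A2 := (huy.pow_const 2).mul (hgm.pow_const 2)
  have hB2nn : ∀ x, 0 ≤ B2 x := fun x => mul_nonneg (sq_nonneg _) (sq_nonneg _)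
  have hA2nn : ∀ x, 0 ≤ A2 x := fun x => mul_nonneg (sq_nonneg _) (sq_nonneg _)
  -- key lintegral comparison
  have key : ∫⁻ x in Set.Ioi (0:ℝ), ENNReal.ofReal (A2 x)
      ≤ ∫⁻ x in Set.Ioi (0:ℝ), ENNReal.ofReal (B2 x) := by
    set F : ℝ → ℝ≥0∞ := Set.indicator (Set.Ioi 0) (fun x => ENNReal.ofReal (B2 x)) with hFdef
    have hFm : Measurable F :=
      (ENNReal.measurable_ofReal.comp hB2m).indicator measurableSet_Ioi
    calc ∫⁻ x in Set.Ioi (0:ℝ), ENNReal.ofReal (A2 x)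
        ≤ ∫⁻ x in Set.Ioi (0:ℝ), F (x + y) := by
          apply setLIntegral_mono (hFm.comp (measurable_id.add_const y))
          intro x hx
          have hx' : (0:ℝ) < x := hx
          have hxy : (0:ℝ) < x + y := by linarith
          have hg1 : g x ≤ g (x + y) := hgmono hx' hxy (by linarith)
          have hgx : 0 ≤ g x := hg0 x hx'
          simp only [hFdef, Function.comp_apply, id_eq]
          rw [Set.indicator_of_mem (Set.mem_Ioi.mpr hxy)]
          apply ENNReal.ofReal_le_ofReal
          have : g x ^ 2 ≤ g (x + y) ^ 2 := by nlinarith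
          simp only [hA2def, hB2def]
          nlinarith [sq_nonneg (u (x + y))]
      _ ≤ ∫⁻ x, F (x + y) := setLIntegral_le_lintegral _ _
      _ = ∫⁻ x, F x := by
          exact (measurePreserving_add_right volume y).lintegral_comp hFm
      _ = ∫⁻ x in Set.Ioi (0:ℝ), ENNReal.ofReal (B2 x) := by
          exact lintegral_indicator measurableSet_Ioi _
  have hA2lt : ∫⁻ x in Set.Ioi (0:ℝ), ENNReal.ofReal (A2 x) < ⊤ := lt_of_le_of_lt key hL2
  -- integrability of B2 and A2
  have hintB2 : IntegrableOn B2 (Set.Ioi 0) := by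
    refine ⟨hB2m.aestronglyMeasurable.restrict, ?_⟩
    rw [hasFiniteIntegral_iff_ofReal (Eventually.of_forall hB2nn)]
    exact hL2
  have hintA2 : IntegrableOn A2 (Set.Ioi 0) := by
    refine ⟨hA2m.aestronglyMeasurable.restrict, ?_⟩
    rw [hasFiniteIntegral_iff_ofReal (Eventually.of_forall hA2nn)]
    exact hA2lt
  -- the cross term
  have hCm : Measurable (fun x => u (x + y) * g x ^ 2 * u x) :=
    (huy.mul (hgm.pow_const 2)).mul hum
  have hbound : ∀ x, |u (x + y) * g x ^ 2 * u x| ≤ (A2 x + B2 x) / 2 := by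
    intro x
    rw [abs_le]
    simp only [hA2def, hB2def]
    constructor <;> nlinarith [sq_nonneg (u (x+y) * g x + u x * g x),
      sq_nonneg (u (x+y) * g x - u x * g x)]
  have hintC : IntegrableOn (fun x => u (x + y) * g x ^ 2 * u x) (Set.Ioi 0) := by
    refine Integrable.mono' ((hintA2.add hintB2).div_const 2)
      hCm.aestronglyMeasurable.restrict ?_
    exact Eventually.of_forall fun x => by rw [Real.norm_eq_abs]; exact hbound x
  have hint : IntegrableOn (fun x => (u (x + y) - u x) * (g x) ^ 2 * u x) (Set.Ioi 0) := by
    have : (fun x => (u (x + y) - u x) * (g x) ^ 2 * u x)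
        = fun x => u (x + y) * g x ^ 2 * u x - B2 x := by
      funext x; simp only [hB2def]; ring
    rw [this]
    exact hintC.sub hintB2
  refine ⟨hint, ?_⟩
  -- integral comparison: ∫ A2 ≤ ∫ B2
  have hIAB : ∫ x in Set.Ioi (0:ℝ), A2 x ≤ ∫ x in Set.Ioi (0:ℝ), B2 x := by
    rw [integral_eq_lintegral_of_nonneg_ae (Eventually.of_forall hA2nn)
      hA2m.aestronglyMeasurable.restrict,
      integral_eq_lintegral_of_nonneg_ae (Eventually.of_forall hB2nn)
      hB2m.aestronglyMeasurable.restrict]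
    exact ENNReal.toReal_mono hL2.ne key
  have hsplit : ∫ x in Set.Ioi (0:ℝ), (u (x + y) - u x) * (g x) ^ 2 * u x
      = (∫ x in Set.Ioi (0:ℝ), u (x + y) * g x ^ 2 * u x) - ∫ x in Set.Ioi (0:ℝ), B2 x := by
    rw [← integral_sub hintC hintB2]
    congr 1; funext x; simp only [hB2def]; ring
  have hcross : ∫ x in Set.Ioi (0:ℝ), u (x + y) * g x ^ 2 * u x
      ≤ ∫ x in Set.Ioi (0:ℝ), (A2 x + B2 x) / 2 := by
    apply integral_mono hintC ((hintA2.add hintB2).div_const 2)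
    intro x
    exact le_trans (le_abs_self _) (hbound x)
  have hfin : ∫ x in Set.Ioi (0:ℝ), (A2 x + B2 x) / 2
      = ((∫ x in Set.Ioi (0:ℝ), A2 x) + ∫ x in Set.Ioi (0:ℝ), B2 x) / 2 := by
    rw [integral_div, integral_add hintA2 hintB2]
  rw [hsplit]
  have := hcross.trans_eq hfin
  linarith
end

section
/- Assume condition (C3) for the kernel K, let f : (0,∞) → (0,∞) be nondecreasing, let μ be a finite positive Borel measure on (0,∞), and let u : (0,∞) → ℝ be measurable with ∫₀^∞ ∫₀^∞ u(x)² K(x,z) f(x)² dx μ(dz) < ∞. Then ∫₀^∞ ∫₀^∞ (u(x+z) − u(x)) K(x,z) f(x)² u(x) dx μ(dz) ≤ 0. In particular, the integral operator A u(x) = ∫ (u(x+z) − u(x)) K(x,z) μ(dz) is dissipative with respect to the inner product (u,v) ↦ ∫ u(x) v(x) f(x)² dx. -/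
open MeasureTheory Filter Topology
open scoped ENNReal ZeroAtInfty

/-- Condition (C3): `K : (0,∞)² → [0,∞)` is symmetric, nondecreasing in each argument, and
twice continuously differentiable up to the boundary with all first and second partial
derivatives bounded by `C`. -/
structure CondC3 (C : ℝ) (K : ℝ → ℝ → ℝ) : Prop where
  nonneg : ∀ x y : ℝ, 0 < x → 0 < y → 0 ≤ K x y
  symm : ∀ x y, K x y = K y x
  mono : ∀ y ∈ Set.Ioi (0:ℝ), MonotoneOn (fun x => K x y) (Set.Ioi 0)
  smooth : ContDiffOn ℝ 2 (Function.uncurry K) (Set.Ici 0 ×ˢ Set.Ici 0)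
  derivBound : ∀ i : ℕ, 1 ≤ i → i ≤ 2 → ∀ p ∈ Set.Ici (0:ℝ) ×ˢ Set.Ici (0:ℝ),
    ‖iteratedFDerivWithin ℝ i (Function.uncurry K) (Set.Ici 0 ×ˢ Set.Ici 0) p‖ ≤ C

/-- `μ` is a solution of the Smoluchowski coagulation equation (condition (C3)) with kernel
`K(x₁,x₂;dy) = K(x₁,x₂) δ_{x₁+x₂}(dy)` and initial condition `μ₀`; the measures are finite
and supported on `(0,∞)`. -/
def IsCoagSolutionC3 (K : ℝ → ℝ → ℝ) (μ₀ : Measure ℝ) (μ : ℝ → Measure ℝ) : Prop :=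
  μ 0 = μ₀ ∧ (∀ t, IsFiniteMeasure (μ t)) ∧ (∀ t, μ t (Set.Iic 0) = 0) ∧
    ∀ g : C₀(ℝ, ℝ), ∀ t ∈ Set.Ici (0:ℝ),
      HasDerivWithinAt (fun s => ∫ y, g y ∂(μ s))
        ((1/2) * ∫ a, ∫ b, (g (a + b) - g a - g b) * K a b ∂(μ t) ∂(μ t))
        (Set.Ici 0) t

/-- `sup_{s ≤ T} ∫ (1 + x^β) μ_s(dx) < ∞` for every `T > 0`. -/
def MomentBoundedC3 (β : ℝ) (μ : ℝ → Measure ℝ) : Prop :=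
  ∀ T > (0:ℝ), ∃ M : ℝ≥0∞, M < ⊤ ∧ ∀ s ∈ Set.Icc (0:ℝ) T,
    ∫⁻ y, ENNReal.ofReal (1 + y ^ β) ∂(μ s) ≤ M

private lemma aemK {K : ℝ → ℝ → ℝ}
    (hsm : ContDiffOn ℝ 2 (Function.uncurry K) (Set.Ici 0 ×ˢ Set.Ici 0))
    {z : ℝ} (hz : 0 ≤ z) :
    AEMeasurable (fun x => K x z) (volume.restrict (Set.Ioi (0:ℝ))) := by
  have hc : ContinuousOn (fun x : ℝ => K x z) (Set.Ici 0) :=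
    hsm.continuousOn.comp (f := fun x : ℝ => (x, z))
      (Continuous.continuousOn (by continuity)) (fun x hx => ⟨hx, hz⟩)
  exact (hc.aemeasurable measurableSet_Ici).mono_measure
    (Measure.restrict_mono Set.Ioi_subset_Ici_self le_rfl)

private lemma aemKshift {K : ℝ → ℝ → ℝ}
    (hsm : ContDiffOn ℝ 2 (Function.uncurry K) (Set.Ici 0 ×ˢ Set.Ici 0))
    {z : ℝ} (hz : 0 ≤ z) :
    AEMeasurable (fun x => K (x + z) z) (volume.restrict (Set.Ioi (0:ℝ))) := by
  have hc : ContinuousOn (fun x : ℝ => K (x + z) z) (Set.Ici 0) :=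
    hsm.continuousOn.comp (f := fun x : ℝ => (x + z, z))
      (Continuous.continuousOn (by continuity)) (fun x hx => ⟨add_nonneg hx hz, hz⟩)
  exact (hc.aemeasurable measurableSet_Ici).mono_measure
    (Measure.restrict_mono Set.Ioi_subset_Ici_self le_rfl)

private lemma shift_lint (g : ℝ → ℝ≥0∞) {z : ℝ} (hz : 0 < z) :
    ∫⁻ x in Set.Ioi (0:ℝ), g (x + z) ≤ ∫⁻ x in Set.Ioi (0:ℝ), g x := by
  have h1 : ∫⁻ x in Set.Ioi (0:ℝ), g (x + z) = ∫⁻ y in (fun x => x + z) '' Set.Ioi (0:ℝ), g y :=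
    (measurePreserving_add_right volume z).setLIntegral_comp_emb
      (measurableEmbedding_addRight z) g (Set.Ioi 0)
  rw [h1, Set.image_add_const_Ioi, zero_add]
  exact lintegral_mono_set (Set.Ioi_subset_Ioi hz.le)

private lemma key_z {C : ℝ} {K : ℝ → ℝ → ℝ} (hK : CondC3 C K)
    {f : ℝ → ℝ} (hf : ∀ x > (0:ℝ), 0 < f x) (hfmono : MonotoneOn f (Set.Ioi 0))
    (hfm : Measurable f) {u : ℝ → ℝ} (hu : Measurable u) {z : ℝ} (hz : 0 < z)
    (hIz : ∫⁻ x in Set.Ioi (0:ℝ), ENNReal.ofReal (u x ^ 2 * K x z * f x ^ 2) < ⊤) :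
    (∫ x in Set.Ioi (0:ℝ), (u (x + z) - u x) * K x z * (f x) ^ 2 * u x ≤ 0) ∧
    ∫⁻ x in Set.Ioi (0:ℝ), ↑‖(u (x + z) - u x) * K x z * (f x) ^ 2 * u x‖₊ ≤
      2 * ∫⁻ x in Set.Ioi (0:ℝ), ENNReal.ofReal (u x ^ 2 * K x z * f x ^ 2) := by
  set ν := volume.restrict (Set.Ioi (0:ℝ)) with hν
  set G : ℝ → ℝ := fun x => |u (x + z)| * (Real.sqrt (K (x + z) z) * f (x + z)) with hG
  set H : ℝ → ℝ := fun x => |u x| * (Real.sqrt (K x z) * f x) with hH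
  set Q : ℝ → ℝ := fun x => u x ^ 2 * K x z * f x ^ 2 with hQ
  set Φ : ℝ → ℝ := fun x => (u (x + z) - u x) * K x z * (f x) ^ 2 * u x with hΦ
  set I : ℝ≥0∞ := ∫⁻ x in Set.Ioi (0:ℝ), ENNReal.ofReal (Q x) with hI
  -- measurability
  have mG : AEMeasurable G ν :=
    ((hu.comp (measurable_add_const z)).abs.aemeasurable).mul
      ((Real.continuous_sqrt.measurable.comp_aemeasurable (aemKshift hK.smooth hz.le)).mul
        ((hfm.comp (measurable_add_const z)).aemeasurable))
  have mH : AEMeasurable H ν :=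
    (hu.abs.aemeasurable).mul
      ((Real.continuous_sqrt.measurable.comp_aemeasurable (aemK hK.smooth hz.le)).mul
        hfm.aemeasurable)
  have mQ : AEMeasurable Q ν :=
    (((hu.pow_const 2).aemeasurable).mul (aemK hK.smooth hz.le)).mul
      ((hfm.pow_const 2).aemeasurable)
  have mΦ : AEMeasurable Φ ν :=
    ((((hu.comp (measurable_add_const z)).aemeasurable.sub hu.aemeasurable).mul
      (aemK hK.smooth hz.le)).mul ((hfm.pow_const 2).aemeasurable)).mul hu.aemeasurable
  -- pointwise facts on Ioi 0
  have hpt : ∀ x ∈ Set.Ioi (0:ℝ),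
      0 ≤ G x ∧ 0 ≤ H x ∧ 0 ≤ Q x ∧ H x ^ 2 = Q x ∧
      G x ^ 2 = u (x + z) ^ 2 * K (x + z) z * f (x + z) ^ 2 ∧
      Φ x ≤ G x * H x - Q x ∧ |Φ x| ≤ G x * H x + Q x := by
    intro x hx
    rw [Set.mem_Ioi] at hx
    have hxz : 0 < x + z := by linarith
    have hKx : 0 ≤ K x z := hK.nonneg _ _ hx hz
    have hKxz : 0 ≤ K (x + z) z := hK.nonneg _ _ hxz hz
    have hfx : 0 < f x := hf x hx
    have hfxz : f x ≤ f (x + z) := hfmono (Set.mem_Ioi.2 hx) (Set.mem_Ioi.2 hxz) (by linarith)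
    have hKle : K x z ≤ K (x + z) z :=
      hK.mono z (Set.mem_Ioi.2 hz) (Set.mem_Ioi.2 hx) (Set.mem_Ioi.2 hxz) (by linarith)
    have hs0 : 0 ≤ Real.sqrt (K x z) * f x := mul_nonneg (Real.sqrt_nonneg _) hfx.le
    have hst : Real.sqrt (K x z) * f x ≤ Real.sqrt (K (x + z) z) * f (x + z) :=
      mul_le_mul (Real.sqrt_le_sqrt hKle) hfxz hfx.le (Real.sqrt_nonneg _)
    have ht0 : 0 ≤ Real.sqrt (K (x + z) z) * f (x + z) := hs0.trans hst
    have hsq : (Real.sqrt (K x z) * f x) ^ 2 = K x z * f x ^ 2 := by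
      rw [mul_pow, Real.sq_sqrt hKx]
    have hsq' : (Real.sqrt (K (x + z) z) * f (x + z)) ^ 2 = K (x + z) z * f (x + z) ^ 2 := by
      rw [mul_pow, Real.sq_sqrt hKxz]
    have hab : u (x + z) * u x ≤ |u (x + z)| * |u x| := by
      rw [← abs_mul]; exact le_abs_self _
    refine ⟨mul_nonneg (abs_nonneg _) ht0, mul_nonneg (abs_nonneg _) hs0, by positivity,
      ?_, ?_, ?_, ?_⟩
    · simp only [hH, hQ, mul_pow, sq_abs]; rw [Real.sq_sqrt hKx]; ring
    · simp only [hG, mul_pow, sq_abs]; rw [Real.sq_sqrt hKxz]; ring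
    · have h1 : Φ x = u (x + z) * u x * (K x z * f x ^ 2) - Q x := by
        simp only [hΦ, hQ]; ring
      rw [h1]
      have h2 : u (x + z) * u x * (K x z * f x ^ 2) ≤ G x * H x := by
        calc u (x + z) * u x * (K x z * f x ^ 2)
            ≤ |u (x + z)| * |u x| * (K x z * f x ^ 2) := by
              apply mul_le_mul_of_nonneg_right hab (by positivity)
          _ = (|u (x + z)| * |u x| * (Real.sqrt (K x z) * f x)) * (Real.sqrt (K x z) * f x) := by
              rw [← hsq]; ring
          _ ≤ (|u (x + z)| * |u x| * (Real.sqrt (K x z) * f x)) *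
              (Real.sqrt (K (x + z) z) * f (x + z)) := by
              apply mul_le_mul_of_nonneg_left hst (by positivity)
          _ = G x * H x := by simp only [hG, hH]; ring
      linarith
    · have h2 : |u (x + z)| * |u x| * (K x z * f x ^ 2) ≤ G x * H x := by
        calc |u (x + z)| * |u x| * (K x z * f x ^ 2)
            = (|u (x + z)| * |u x| * (Real.sqrt (K x z) * f x)) * (Real.sqrt (K x z) * f x) := by
              rw [← hsq]; ring
          _ ≤ (|u (x + z)| * |u x| * (Real.sqrt (K x z) * f x)) *
              (Real.sqrt (K (x + z) z) * f (x + z)) := by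
              apply mul_le_mul_of_nonneg_left hst (by positivity)
          _ = G x * H x := by simp only [hG, hH]; ring
      calc |Φ x| = |u (x + z) - u x| * (K x z * f x ^ 2) * |u x| := by
            simp only [hΦ, abs_mul, abs_of_nonneg hKx, abs_of_nonneg (sq_nonneg (f x))]
            ring
        _ ≤ (|u (x + z)| + |u x|) * (K x z * f x ^ 2) * |u x| := by
            gcongr
            exact abs_sub _ _
        _ = |u (x + z)| * |u x| * (K x z * f x ^ 2) + u x ^ 2 * (K x z * f x ^ 2) := by
            rw [← sq_abs (u x)]; ring
        _ ≤ G x * H x + Q x := by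
            simp only [hQ]
            have : u x ^ 2 * (K x z * f x ^ 2) = u x ^ 2 * K x z * f x ^ 2 := by ring
            rw [this]
            exact add_le_add h2 le_rfl
  have hmes : MeasurableSet (Set.Ioi (0:ℝ)) := measurableSet_Ioi
  -- second moments
  have hH2 : ∫⁻ x in Set.Ioi (0:ℝ), ENNReal.ofReal (H x) ^ (2:ℝ) = I := by
    rw [hI]
    refine setLIntegral_congr_fun hmes (fun x hx => ?_)
    obtain ⟨-, hH0, -, hHsq, -, -, -⟩ := hpt x hx
    rw [show (2:ℝ) = ((2:ℕ):ℝ) by norm_num, ENNReal.rpow_natCast,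
      ← ENNReal.ofReal_pow hH0, hHsq]
  have hG2 : ∫⁻ x in Set.Ioi (0:ℝ), ENNReal.ofReal (G x) ^ (2:ℝ) ≤ I := by
    have h1 : ∫⁻ x in Set.Ioi (0:ℝ), ENNReal.ofReal (G x) ^ (2:ℝ)
        = ∫⁻ x in Set.Ioi (0:ℝ), (fun y => ENNReal.ofReal (Q y)) (x + z) := by
      refine setLIntegral_congr_fun hmes (fun x hx => ?_)
      obtain ⟨hG0, -, -, -, hGsq, -, -⟩ := hpt x hx
      rw [show (2:ℝ) = ((2:ℕ):ℝ) by norm_num, ENNReal.rpow_natCast,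
        ← ENNReal.ofReal_pow hG0, hGsq]
    rw [h1, hI]
    exact shift_lint (fun y => ENNReal.ofReal (Q y)) hz
  -- Cauchy-Schwarz
  have hofG : AEMeasurable (fun x => ENNReal.ofReal (G x)) ν :=
    ENNReal.measurable_ofReal.comp_aemeasurable mG
  have hofH : AEMeasurable (fun x => ENNReal.ofReal (H x)) ν :=
    ENNReal.measurable_ofReal.comp_aemeasurable mH
  have hCS : ∫⁻ x in Set.Ioi (0:ℝ), ENNReal.ofReal (G x * H x) ≤ I := by
    have h0 : ∫⁻ x in Set.Ioi (0:ℝ), ENNReal.ofReal (G x * H x)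
        = ∫⁻ x in Set.Ioi (0:ℝ),
            ((fun y => ENNReal.ofReal (G y)) * fun y => ENNReal.ofReal (H y)) x := by
      refine setLIntegral_congr_fun hmes (fun x hx => ?_)
      exact ENNReal.ofReal_mul (hpt x hx).1
    calc ∫⁻ x in Set.Ioi (0:ℝ), ENNReal.ofReal (G x * H x)
        = ∫⁻ x in Set.Ioi (0:ℝ),
            ((fun y => ENNReal.ofReal (G y)) * fun y => ENNReal.ofReal (H y)) x := h0
      _ ≤ (∫⁻ x in Set.Ioi (0:ℝ), ENNReal.ofReal (G x) ^ (2:ℝ)) ^ (1/2:ℝ) *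
          (∫⁻ x in Set.Ioi (0:ℝ), ENNReal.ofReal (H x) ^ (2:ℝ)) ^ (1/2:ℝ) :=
          ENNReal.lintegral_mul_le_Lp_mul_Lq ν (Real.holderConjugate_iff.mpr ⟨one_lt_two, by norm_num⟩) hofG hofH
      _ ≤ I ^ (1/2:ℝ) * I ^ (1/2:ℝ) := by
          gcongr
          exact hH2.le
      _ = I := by
          rw [← ENNReal.rpow_add_of_nonneg _ _ (by norm_num) (by norm_num)]
          norm_num
  -- nonnegativity a.e.
  have hGH0 : 0 ≤ᵐ[ν] fun x => G x * H x := by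
    rw [hν]
    exact (ae_restrict_iff' hmes).2 (ae_of_all _ fun x hx =>
      mul_nonneg (hpt x hx).1 (hpt x hx).2.1)
  have hQ0 : 0 ≤ᵐ[ν] Q := by
    rw [hν]
    exact (ae_restrict_iff' hmes).2 (ae_of_all _ fun x hx => (hpt x hx).2.2.1)
  -- integrability
  have hQint : Integrable Q ν :=
    ⟨mQ.aestronglyMeasurable, (hasFiniteIntegral_iff_ofReal hQ0).2 hIz⟩
  have hGHint : Integrable (fun x => G x * H x) ν :=
    ⟨(mG.mul mH).aestronglyMeasurable,
      (hasFiniteIntegral_iff_ofReal hGH0).2 (lt_of_le_of_lt hCS hIz)⟩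
  have hΦbnd : ∀ᵐ x ∂(volume.restrict (Set.Ioi (0:ℝ))), ‖Φ x‖ ≤ G x * H x + Q x := by
    refine (ae_restrict_iff' hmes).2 (ae_of_all _ fun x hx => ?_)
    rw [Real.norm_eq_abs]
    exact (hpt x hx).2.2.2.2.2.2
  have hΦint : Integrable Φ ν :=
    (hGHint.add hQint).mono' mΦ.aestronglyMeasurable hΦbnd
  constructor
  · have hle : ∫ x in Set.Ioi (0:ℝ), Φ x ≤ ∫ x in Set.Ioi (0:ℝ), (G x * H x - Q x) := by
      refine integral_mono_ae hΦint (hGHint.sub hQint) ?_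
      refine (ae_restrict_iff' hmes).2 (ae_of_all _ fun x hx => ?_)
      exact (hpt x hx).2.2.2.2.2.1
    have h1 : ∫ x in Set.Ioi (0:ℝ), G x * H x
        = (∫⁻ x in Set.Ioi (0:ℝ), ENNReal.ofReal (G x * H x)).toReal :=
      integral_eq_lintegral_of_nonneg_ae hGH0 (mG.mul mH).aestronglyMeasurable
    have h2 : ∫ x in Set.Ioi (0:ℝ), Q x = I.toReal :=
      integral_eq_lintegral_of_nonneg_ae hQ0 mQ.aestronglyMeasurable
    calc ∫ x in Set.Ioi (0:ℝ), Φ x ≤ ∫ x in Set.Ioi (0:ℝ), (G x * H x - Q x) := hle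
      _ = (∫ x in Set.Ioi (0:ℝ), G x * H x) - ∫ x in Set.Ioi (0:ℝ), Q x :=
          integral_sub hGHint hQint
      _ ≤ I.toReal - I.toReal := by
          rw [h1, h2]
          exact sub_le_sub_right (ENNReal.toReal_mono hIz.ne hCS) _
      _ = 0 := by ring
  · have hnb : ∀ᵐ x ∂(volume.restrict (Set.Ioi (0:ℝ))), (‖Φ x‖₊ : ℝ≥0∞)
        ≤ ENNReal.ofReal (G x * H x) + ENNReal.ofReal (Q x) := by
      refine (ae_restrict_iff' hmes).2 (ae_of_all _ fun x hx => ?_)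
      obtain ⟨hG0, hH0, hQ0x, -, -, -, habs⟩ := hpt x hx
      calc (‖Φ x‖₊ : ℝ≥0∞) = ENNReal.ofReal |Φ x| := by
            rw [← enorm_eq_nnnorm, ← ofReal_norm, Real.norm_eq_abs]
        _ ≤ ENNReal.ofReal (G x * H x + Q x) := ENNReal.ofReal_le_ofReal habs
        _ = ENNReal.ofReal (G x * H x) + ENNReal.ofReal (Q x) :=
            ENNReal.ofReal_add (mul_nonneg hG0 hH0) hQ0x
    calc ∫⁻ x in Set.Ioi (0:ℝ), (‖Φ x‖₊ : ℝ≥0∞)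
        ≤ ∫⁻ x in Set.Ioi (0:ℝ), (ENNReal.ofReal (G x * H x) + ENNReal.ofReal (Q x)) :=
          lintegral_mono_ae hnb
      _ = (∫⁻ x in Set.Ioi (0:ℝ), ENNReal.ofReal (G x * H x)) + I := by
          rw [hI]
          exact lintegral_add_left' (ENNReal.measurable_ofReal.comp_aemeasurable (mG.mul mH)) _
      _ ≤ I + I := add_le_add hCS le_rfl
      _ = 2 * I := (two_mul I).symm

/-- Dissipativity of the integral operator `A u(x) = ∫ (u(x+z) − u(x)) K(x,z) μ(dz)` in the
weighted `L²` space with weight `f²`, for a kernel `K` satisfying condition (C3), a positive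
nondecreasing `f` and a finite positive measure `μ` on `(0,∞)`:
`∫∫ (u(x+z) − u(x)) K(x,z) f(x)² u(x) dx μ(dz) ≤ 0`, i.e. `(Au, u)_{f} ≤ 0`. -/
theorem stmt14 (C : ℝ) (K : ℝ → ℝ → ℝ) (hK : CondC3 C K)
    (f : ℝ → ℝ) (hf : ∀ x > (0:ℝ), 0 < f x) (hfmono : MonotoneOn f (Set.Ioi 0))
    (hfm : Measurable f)
    (μ : Measure ℝ) [IsFiniteMeasure μ] (hμ : μ (Set.Iic 0) = 0)
    (u : ℝ → ℝ) (hu : Measurable u)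
    (hL2 : ∫⁻ z, (∫⁻ x in Set.Ioi (0:ℝ),
        ENNReal.ofReal ((u x) ^ 2 * K x z * (f x) ^ 2)) ∂μ < ⊤) :
    (∫ z, (∫ x in Set.Ioi (0:ℝ), (u (x + z) - u x) * K x z * (f x) ^ 2 * u x) ∂μ ≤ 0) ∧
    ∫ x in Set.Ioi (0:ℝ), (∫ z, (u (x + z) - u x) * K x z ∂μ) * u x * (f x) ^ 2 ≤ 0 := by
  classical
  have hμr : μ.restrict (Set.Ioi 0) = μ := by
    refine Measure.restrict_eq_self_of_ae_mem ?_
    rw [ae_iff]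
    convert hμ using 2
    ext x
    simp [not_lt]
  have haez : ∀ᵐ z ∂μ, 0 < z := by
    rw [ae_iff]
    convert hμ using 2
    ext x
    simp [not_lt]
  -- joint measurability of K
  have hKj : AEMeasurable (fun p : ℝ × ℝ => K p.1 p.2) ((volume.restrict (Set.Ioi (0:ℝ))).prod μ) := by
    have h3 : (volume.restrict (Set.Ioi (0:ℝ))).prod μ
        = (volume.prod μ).restrict (Set.Ioi 0 ×ˢ Set.Ioi 0) := by
      rw [← hμr, Measure.prod_restrict, hμr]
    have h2 : AEMeasurable (Function.uncurry K)
        ((volume.prod μ).restrict (Set.Ici 0 ×ˢ Set.Ici 0)) :=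
      hK.smooth.continuousOn.aemeasurable (measurableSet_Ici.prod measurableSet_Ici)
    rw [h3]
    exact h2.mono_measure (Measure.restrict_mono
      (Set.prod_mono Set.Ioi_subset_Ici_self Set.Ioi_subset_Ici_self) le_rfl)
  -- joint measurability of the integrands
  have mQj : AEMeasurable (fun p : ℝ × ℝ =>
      ENNReal.ofReal (u p.1 ^ 2 * K p.1 p.2 * f p.1 ^ 2)) ((volume.restrict (Set.Ioi (0:ℝ))).prod μ) :=
    ENNReal.measurable_ofReal.comp_aemeasurable
      ((((hu.comp measurable_fst).pow_const 2).aemeasurable.mul hKj).mul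
        ((hfm.comp measurable_fst).pow_const 2).aemeasurable)
  have mΦj : AEMeasurable (fun p : ℝ × ℝ =>
      (u (p.1 + p.2) - u p.1) * K p.1 p.2 * f p.1 ^ 2 * u p.1) ((volume.restrict (Set.Ioi (0:ℝ))).prod μ) :=
    ((((hu.comp (measurable_fst.add measurable_snd)).aemeasurable.sub
      (hu.comp measurable_fst).aemeasurable).mul hKj).mul
      ((hfm.comp measurable_fst).pow_const 2).aemeasurable).mul
      (hu.comp measurable_fst).aemeasurable
  -- a.e. measurability of z ↦ I z and a.e. finiteness
  set F : ℝ × ℝ → ℝ≥0∞ := fun p => ENNReal.ofReal (u p.1 ^ 2 * K p.1 p.2 * f p.1 ^ 2) with hF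
  set F' : ℝ × ℝ → ℝ≥0∞ := mQj.mk F with hF'
  have hF'm : Measurable F' := mQj.measurable_mk
  have hFswap : ∀ᵐ z ∂μ, ∀ᵐ x ∂(volume.restrict (Set.Ioi (0:ℝ))), F' (x, z) = F (x, z) := by
    have h0 : ∀ᵐ p ∂((volume.restrict (Set.Ioi (0:ℝ))).prod μ), F' p = F p :=
      mQj.ae_eq_mk.mono fun p hp => hp.symm
    have h1 : ∀ᵐ q ∂(μ.prod (volume.restrict (Set.Ioi (0:ℝ)))), F' q.swap = F q.swap :=
      ((Measure.measurePreserving_swap :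
          MeasurePreserving Prod.swap (μ.prod (volume.restrict (Set.Ioi (0:ℝ))))
            _).quasiMeasurePreserving.tendsto_ae).eventually h0
    exact Measure.ae_ae_of_ae_prod h1
  have hIae : AEMeasurable
      (fun z => ∫⁻ x in Set.Ioi (0:ℝ), ENNReal.ofReal (u x ^ 2 * K x z * f x ^ 2)) μ := by
    refine ⟨fun z => ∫⁻ x, F' (x, z) ∂(volume.restrict (Set.Ioi (0:ℝ))),
      hF'm.lintegral_prod_left', ?_⟩
    filter_upwards [hFswap] with z hz
    exact lintegral_congr_ae (hz.mono fun x hx => hx.symm)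
  have haefin : ∀ᵐ z ∂μ,
      (∫⁻ x in Set.Ioi (0:ℝ), ENNReal.ofReal (u x ^ 2 * K x z * f x ^ 2)) < ⊤ :=
    ae_lt_top' hIae hL2.ne
  -- part 1
  have h1 : ∫ z, (∫ x in Set.Ioi (0:ℝ), (u (x + z) - u x) * K x z * (f x) ^ 2 * u x) ∂μ ≤ 0 := by
    refine integral_nonpos_of_ae ?_
    filter_upwards [haez, haefin] with z hz hfin
    exact (key_z hK hf hfmono hfm hu hz hfin).1
  refine ⟨h1, ?_⟩
  -- joint integrability
  have hint : Integrable (fun p : ℝ × ℝ =>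
      (u (p.1 + p.2) - u p.1) * K p.1 p.2 * f p.1 ^ 2 * u p.1) ((volume.restrict (Set.Ioi (0:ℝ))).prod μ) := by
    refine ⟨mΦj.aestronglyMeasurable, ?_⟩
    rw [HasFiniteIntegral]
    calc ∫⁻ p, ↑‖(u (p.1 + p.2) - u p.1) * K p.1 p.2 * f p.1 ^ 2 * u p.1‖₊ ∂((volume.restrict (Set.Ioi (0:ℝ))).prod μ)
        = ∫⁻ z, ∫⁻ x, ↑‖(u (x + z) - u x) * K x z * f x ^ 2 * u x‖₊ ∂(volume.restrict (Set.Ioi (0:ℝ))) ∂μ :=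
          lintegral_prod_symm _ mΦj.enorm
      _ ≤ ∫⁻ z, 2 * (∫⁻ x in Set.Ioi (0:ℝ), ENNReal.ofReal (u x ^ 2 * K x z * f x ^ 2)) ∂μ := by
          refine lintegral_mono_ae ?_
          filter_upwards [haez, haefin] with z hz hfin
          exact (key_z hK hf hfmono hfm hu hz hfin).2
      _ = 2 * ∫⁻ z, (∫⁻ x in Set.Ioi (0:ℝ),
            ENNReal.ofReal (u x ^ 2 * K x z * f x ^ 2)) ∂μ :=
          lintegral_const_mul' 2 _ (by norm_num)
      _ < ⊤ := ENNReal.mul_lt_top (by norm_num) hL2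
  have hswap : ∫ x, (∫ z, (u (x + z) - u x) * K x z * f x ^ 2 * u x ∂μ) ∂(volume.restrict (Set.Ioi (0:ℝ)))
      = ∫ z, (∫ x, (u (x + z) - u x) * K x z * f x ^ 2 * u x ∂(volume.restrict (Set.Ioi (0:ℝ)))) ∂μ :=
    integral_integral_swap hint
  have hptx : ∀ x : ℝ, (∫ z, (u (x + z) - u x) * K x z ∂μ) * u x * (f x) ^ 2
      = ∫ z, (u (x + z) - u x) * K x z * f x ^ 2 * u x ∂μ := by
    intro x
    calc (∫ z, (u (x + z) - u x) * K x z ∂μ) * u x * (f x) ^ 2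
        = (∫ z, (u (x + z) - u x) * K x z ∂μ) * (u x * f x ^ 2) := by ring
      _ = ∫ z, ((u (x + z) - u x) * K x z) * (u x * f x ^ 2) ∂μ :=
          (integral_mul_const _ _).symm
      _ = ∫ z, (u (x + z) - u x) * K x z * f x ^ 2 * u x ∂μ :=
          integral_congr_ae (Eventually.of_forall fun z => by ring)
  calc ∫ x in Set.Ioi (0:ℝ), (∫ z, (u (x + z) - u x) * K x z ∂μ) * u x * (f x) ^ 2
      = ∫ x in Set.Ioi (0:ℝ), ∫ z, (u (x + z) - u x) * K x z * f x ^ 2 * u x ∂μ :=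
        integral_congr_ae (Eventually.of_forall fun x => hptx x)
    _ = ∫ z, (∫ x in Set.Ioi (0:ℝ), (u (x + z) - u x) * K x z * f x ^ 2 * u x) ∂μ := hswap
    _ ≤ 0 := h1
end

section
/- Let k ≥ 0, put f_k(x) := 1 + x^k, let z > 0, and let φ : (0,∞) → ℝ be measurable with ∫₀^∞ φ(x)² f_k(x)^{-2} dx < ∞. Then ∫_z^∞ ( ∫_x^{x+z} φ(y) dy )² f_k(x)^{-2} dx ≤ 4^k z² ∫₀^∞ φ(y)² f_k(y)^{-2} dy. Equivalently, the map φ ↦ 1_{{z ≤ x}} ∫_x^{x+z} φ(y) dy is a bounded operator on the weighted space L_{2,f_k} (with norm ‖φ‖ = ‖φ/f_k‖_{L²}) of norm at most 2^k z. -/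
open MeasureTheory Filter Topology
open scoped ENNReal

lemma cs_aux (μ : Measure ℝ) (f : ℝ → ℝ≥0∞) (hf : AEMeasurable f μ) :
    (∫⁻ y, f y ∂μ) ^ 2 ≤ μ Set.univ * ∫⁻ y, f y ^ 2 ∂μ := by
  have hpq : Real.HolderConjugate 2 2 := Real.HolderConjugate.two_two
  have h := ENNReal.lintegral_mul_le_Lp_mul_Lq μ hpq hf
    (aemeasurable_const (b := (1:ℝ≥0∞)))
  simp only [Pi.mul_apply, mul_one, ENNReal.one_rpow, lintegral_one] at h
  have hsq : ∫⁻ a, f a ^ (2:ℝ) ∂μ = ∫⁻ y, f y ^ 2 ∂μ := by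
    refine lintegral_congr fun a => ?_
    rw [← ENNReal.rpow_natCast (f a) 2]; norm_num
  rw [hsq] at h
  have h2 := pow_le_pow_left₀ zero_le h 2
  calc (∫⁻ y, f y ∂μ) ^ 2
      ≤ ((∫⁻ y, f y ^ 2 ∂μ) ^ (1/(2:ℝ)) * (μ Set.univ) ^ (1/(2:ℝ))) ^ 2 := h2
    _ = μ Set.univ * ∫⁻ y, f y ^ 2 ∂μ := by
        rw [mul_pow, ← ENNReal.rpow_natCast (_ ^ (1/(2:ℝ))) 2,
          ← ENNReal.rpow_natCast ((μ Set.univ) ^ (1/(2:ℝ))) 2,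
          ← ENNReal.rpow_mul, ← ENNReal.rpow_mul]
        norm_num [mul_comm]

lemma stepA (k : ℝ) (hk : 0 ≤ k) (z : ℝ) (hz : 0 < z) (φ : ℝ → ℝ) (hφ : Measurable φ)
    (x : ℝ) (hx : x ∈ Set.Ioi z) :
    ENNReal.ofReal (((∫ y in Set.Ioc x (x + z), φ y) / (1 + x ^ k)) ^ 2)
      ≤ ENNReal.ofReal ((4:ℝ) ^ k * z)
        * ∫⁻ y in Set.Ioc x (x + z), ENNReal.ofReal ((φ y / (1 + y ^ k)) ^ 2) := by
  rw [Set.mem_Ioi] at hx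
  have hx0 : 0 < x := hz.trans hx
  have hc : 0 < 1 + x ^ k := by positivity
  set c := 1 + x ^ k with hcdef
  set s := Set.Ioc x (x + z) with hsdef
  set A := ∫ y in s, φ y with hAdef
  -- key weight comparison
  have hkey : ∀ y ∈ s, 0 < y ∧ 1 + y ^ k ≤ 2 ^ k * c := by
    intro y hy
    obtain ⟨hy1, hy2⟩ := hy
    have hy0 : 0 < y := hx0.trans hy1
    refine ⟨hy0, ?_⟩
    have h2k : (1:ℝ) ≤ 2 ^ k := Real.one_le_rpow one_le_two hk
    have hyk : y ^ k ≤ 2 ^ k * x ^ k := by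
      calc y ^ k ≤ (2 * x) ^ k := Real.rpow_le_rpow hy0.le (by linarith) hk
        _ = 2 ^ k * x ^ k := Real.mul_rpow (by norm_num) hx0.le
    have hxk : 0 ≤ x ^ k := Real.rpow_nonneg hx0.le k
    calc 1 + y ^ k ≤ 2 ^ k + 2 ^ k * x ^ k := by linarith
      _ = 2 ^ k * c := by rw [hcdef]; ring
  -- pointwise real inequality
  have hpt : ∀ y ∈ s, φ y ^ 2 / c ^ 2 ≤ (4:ℝ) ^ k * (φ y / (1 + y ^ k)) ^ 2 := by
    intro y hy
    obtain ⟨hy0, hyd⟩ := hkey y hy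
    have hd : 0 < 1 + y ^ k := by positivity
    have h1 : φ y ^ 2 / c ^ 2 = (φ y / (1 + y ^ k)) ^ 2 * ((1 + y ^ k) / c) ^ 2 := by
      field_simp
    have h2 : ((1 + y ^ k) / c) ^ 2 ≤ (4:ℝ) ^ k := by
      have h4 : ((2:ℝ) ^ k) ^ 2 = (4:ℝ) ^ k := by
        rw [pow_two, ← Real.mul_rpow (by norm_num) (by norm_num)]; norm_num
      rw [← h4]
      exact pow_le_pow_left₀ (div_nonneg hd.le hc.le) ((div_le_iff₀ hc).mpr hyd) 2
    calc φ y ^ 2 / c ^ 2 = (φ y / (1 + y ^ k)) ^ 2 * ((1 + y ^ k) / c) ^ 2 := h1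
      _ ≤ (φ y / (1 + y ^ k)) ^ 2 * (4:ℝ) ^ k :=
          mul_le_mul_of_nonneg_left h2 (sq_nonneg _)
      _ = (4:ℝ) ^ k * (φ y / (1 + y ^ k)) ^ 2 := mul_comm _ _
  -- ENNReal chain
  have hcsq : (0:ℝ) < c ^ 2 := by positivity
  have hA2 : ENNReal.ofReal (A ^ 2)
      ≤ volume s * ∫⁻ y in s, ENNReal.ofReal (φ y ^ 2) := by
    have e1 : ENNReal.ofReal (A ^ 2) = (↑‖A‖₊ : ℝ≥0∞) ^ 2 := by
      rw [← enorm_eq_nnnorm, Real.enorm_eq_ofReal_abs, ← ENNReal.ofReal_pow (abs_nonneg _), sq_abs]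
    have e2 : ∀ y, (↑‖φ y‖₊ : ℝ≥0∞) ^ 2 = ENNReal.ofReal (φ y ^ 2) := fun y => by
      rw [← enorm_eq_nnnorm, Real.enorm_eq_ofReal_abs, ← ENNReal.ofReal_pow (abs_nonneg _), sq_abs]
    rw [e1]
    calc (↑‖A‖₊ : ℝ≥0∞) ^ 2 ≤ (∫⁻ y in s, ↑‖φ y‖₊) ^ 2 :=
          pow_le_pow_left₀ zero_le (enorm_integral_le_lintegral_enorm _) 2
      _ ≤ (volume.restrict s) Set.univ * ∫⁻ y in s, (↑‖φ y‖₊ : ℝ≥0∞) ^ 2 :=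
          cs_aux _ _ hφ.enorm.aemeasurable
      _ = volume s * ∫⁻ y in s, ENNReal.ofReal (φ y ^ 2) := by
          rw [Measure.restrict_apply_univ]
          congr 1
          exact lintegral_congr fun y => e2 y
  have hvol : volume s = ENNReal.ofReal z := by
    rw [hsdef, Real.volume_Ioc]; ring_nf
  have hinv_ne_top : (ENNReal.ofReal (c ^ 2))⁻¹ ≠ ⊤ :=
    ENNReal.inv_ne_top.mpr (by simp [ENNReal.ofReal_pos.mpr hcsq, (ENNReal.ofReal_pos.mpr hcsq).ne'])
  calc ENNReal.ofReal ((A / c) ^ 2)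
      = ENNReal.ofReal (A ^ 2) / ENNReal.ofReal (c ^ 2) := by
        rw [div_pow, ENNReal.ofReal_div_of_pos hcsq]
    _ ≤ (volume s * ∫⁻ y in s, ENNReal.ofReal (φ y ^ 2)) / ENNReal.ofReal (c ^ 2) := by
        gcongr
    _ = ENNReal.ofReal z * ∫⁻ y in s, ENNReal.ofReal (φ y ^ 2) * (ENNReal.ofReal (c ^ 2))⁻¹ := by
        rw [hvol, div_eq_mul_inv, mul_assoc, lintegral_mul_const' _ _ hinv_ne_top]
    _ ≤ ENNReal.ofReal z * ∫⁻ y in s, ENNReal.ofReal ((4:ℝ) ^ k * (φ y / (1 + y ^ k)) ^ 2) := by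
        refine mul_le_mul_right (lintegral_mono_ae ?_) _
        filter_upwards [ae_restrict_mem measurableSet_Ioc] with y hy
        calc ENNReal.ofReal (φ y ^ 2) * (ENNReal.ofReal (c ^ 2))⁻¹
            = ENNReal.ofReal (φ y ^ 2 / c ^ 2) := by
              rw [ENNReal.ofReal_div_of_pos hcsq, div_eq_mul_inv]
          _ ≤ ENNReal.ofReal ((4:ℝ) ^ k * (φ y / (1 + y ^ k)) ^ 2) :=
              ENNReal.ofReal_le_ofReal (hpt y hy)
    _ = ENNReal.ofReal ((4:ℝ) ^ k * z)
        * ∫⁻ y in s, ENNReal.ofReal ((φ y / (1 + y ^ k)) ^ 2) := by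
        have h4 : (0:ℝ) ≤ (4:ℝ) ^ k := Real.rpow_nonneg (by norm_num) k
        simp_rw [ENNReal.ofReal_mul h4]
        rw [lintegral_const_mul' _ _ ENNReal.ofReal_ne_top, ← mul_assoc,
          ← ENNReal.ofReal_mul hz.le, mul_comm z ((4:ℝ) ^ k),
          ENNReal.ofReal_mul h4]

lemma stepC (z : ℝ) (hz : 0 < z) (g : ℝ → ℝ≥0∞) (hg : Measurable g) :
    ∫⁻ x in Set.Ioi z, ∫⁻ y in Set.Ioc x (x + z), g y
      ≤ ENNReal.ofReal z * ∫⁻ y in Set.Ioi (0:ℝ), g y := by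
  have hrw : ∀ x : ℝ, ∫⁻ y in Set.Ioc x (x + z), g y
      = ∫⁻ y, (Set.Ioc x (x + z)).indicator g y :=
    fun x => (lintegral_indicator measurableSet_Ioc g).symm
  simp_rw [hrw]
  have hmeas : AEMeasurable
      (Function.uncurry fun x y => (Set.Ioc x (x + z)).indicator g y)
      ((volume.restrict (Set.Ioi z)).prod volume) := by
    have heq : (Function.uncurry fun x y => (Set.Ioc x (x + z)).indicator g y)
        = ({p : ℝ × ℝ | p.1 < p.2 ∧ p.2 ≤ p.1 + z}).indicator (fun p => g p.2) := by
      funext p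
      rcases p with ⟨x, y⟩
      simp only [Function.uncurry, Set.indicator_apply, Set.mem_Ioc, Set.mem_setOf_eq]
    rw [heq]
    exact ((hg.comp measurable_snd).indicator
      ((measurableSet_lt measurable_fst measurable_snd).inter
        (measurableSet_le measurable_snd (measurable_fst.add_const z)))).aemeasurable
  rw [lintegral_lintegral_swap hmeas]
  have hb : ∀ y : ℝ, (∫⁻ x in Set.Ioi z, (Set.Ioc x (x + z)).indicator g y)
      ≤ (Set.Ioi (0:ℝ)).indicator (fun y => ENNReal.ofReal z * g y) y := by
    intro y
    have h1 : ∀ x : ℝ, (Set.Ioc x (x + z)).indicator g y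
        = (Set.Ico (y - z) y).indicator (fun _ => g y) x := by
      intro x
      have hiff : (x < y ∧ y ≤ x + z) ↔ (y - z ≤ x ∧ x < y) := by
        constructor <;> rintro ⟨h1, h2⟩ <;> exact ⟨by linarith, by linarith⟩
      simp only [Set.indicator_apply, Set.mem_Ioc, Set.mem_Ico, hiff]
    simp_rw [h1]
    rw [lintegral_indicator_const measurableSet_Ico,
      Measure.restrict_apply measurableSet_Ico]
    by_cases hy : 0 < y
    · have hle : volume (Set.Ico (y - z) y ∩ Set.Ioi z) ≤ ENNReal.ofReal z := by
        refine le_trans (measure_mono Set.inter_subset_left) ?_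
        rw [Real.volume_Ico]
        exact ENNReal.ofReal_le_ofReal (by linarith)
      calc g y * volume (Set.Ico (y - z) y ∩ Set.Ioi z)
          ≤ g y * ENNReal.ofReal z := mul_le_mul_right hle _
        _ = (Set.Ioi (0:ℝ)).indicator (fun y => ENNReal.ofReal z * g y) y := by
            rw [Set.indicator_of_mem (Set.mem_Ioi.mpr hy), mul_comm]
    · have hempty : Set.Ico (y - z) y ∩ Set.Ioi z = ∅ := by
        ext x
        simp only [Set.mem_inter_iff, Set.mem_Ico, Set.mem_Ioi, Set.mem_empty_iff_false,
          iff_false, not_and]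
        intro h1 h2
        rw [not_lt] at hy
        linarith
      rw [hempty]
      simp
  calc ∫⁻ y, ∫⁻ x in Set.Ioi z, (Set.Ioc x (x + z)).indicator g y
      ≤ ∫⁻ y, (Set.Ioi (0:ℝ)).indicator (fun y => ENNReal.ofReal z * g y) y :=
        lintegral_mono hb
    _ = ∫⁻ y in Set.Ioi (0:ℝ), ENNReal.ofReal z * g y :=
        lintegral_indicator measurableSet_Ioi _
    _ = ENNReal.ofReal z * ∫⁻ y in Set.Ioi (0:ℝ), g y :=
        lintegral_const_mul' _ _ ENNReal.ofReal_ne_top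

/-- The sliding-average operator bound in the weighted space `L_{2,f_k}`, `f_k(x) = 1 + x^k`:
`∫_z^∞ (∫_x^{x+z} φ(y) dy)² f_k(x)⁻² dx ≤ 4^k z² ∫₀^∞ (φ/f_k)²`, i.e. the map
`φ ↦ 1_{z ≤ x} ∫_x^{x+z} φ` is bounded on `L_{2,f_k}` with norm at most `2^k z`. -/
theorem stmt16 (k : ℝ) (hk : 0 ≤ k) (z : ℝ) (hz : 0 < z) (φ : ℝ → ℝ) (hφ : Measurable φ)
    (hL2 : ∫⁻ x in Set.Ioi (0:ℝ), ENNReal.ofReal ((φ x / (1 + x ^ k)) ^ 2) < ⊤) :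
    ∫⁻ x in Set.Ioi z,
        ENNReal.ofReal (((∫ y in Set.Ioc x (x + z), φ y) / (1 + x ^ k)) ^ 2)
      ≤ ENNReal.ofReal ((4:ℝ) ^ k * z ^ 2)
        * ∫⁻ x in Set.Ioi (0:ℝ), ENNReal.ofReal ((φ x / (1 + x ^ k)) ^ 2) := by

  set g : ℝ → ℝ≥0∞ := fun y => ENNReal.ofReal ((φ y / (1 + y ^ k)) ^ 2) with hgdef
  have hg : Measurable g :=
    ENNReal.measurable_ofReal.comp
      ((hφ.div (measurable_const.add (measurable_id.pow_const k))).pow_const 2)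
  have h4 : (0:ℝ) ≤ (4:ℝ) ^ k := Real.rpow_nonneg (by norm_num) k
  calc ∫⁻ x in Set.Ioi z,
        ENNReal.ofReal (((∫ y in Set.Ioc x (x + z), φ y) / (1 + x ^ k)) ^ 2)
      ≤ ∫⁻ x in Set.Ioi z, ENNReal.ofReal ((4:ℝ) ^ k * z) * ∫⁻ y in Set.Ioc x (x + z), g y := by
        refine lintegral_mono_ae ?_
        filter_upwards [ae_restrict_mem measurableSet_Ioi] with x hx
        exact stepA k hk z hz φ hφ x hx
    _ = ENNReal.ofReal ((4:ℝ) ^ k * z)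
        * ∫⁻ x in Set.Ioi z, ∫⁻ y in Set.Ioc x (x + z), g y :=
        lintegral_const_mul' _ _ ENNReal.ofReal_ne_top
    _ ≤ ENNReal.ofReal ((4:ℝ) ^ k * z) * (ENNReal.ofReal z * ∫⁻ y in Set.Ioi (0:ℝ), g y) :=
        mul_le_mul_right (stepC z hz g hg) _
    _ = ENNReal.ofReal ((4:ℝ) ^ k * z ^ 2) * ∫⁻ y in Set.Ioi (0:ℝ), g y := by
        rw [← mul_assoc, ← ENNReal.ofReal_mul (by positivity)]
        congr 2
        ring
end
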